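/- arXiv:2401.06420 — 5 statements merged into one kernel-verified Lean document; each statement's English description precedes it below -/
import Mathlib

section
/- Let J = [c,d] with 0 < c < d. Suppose 0 < λ₁ < 1, λ_k ≥ 0 for 2 ≤ k ≤ n with ∑_{k=1}^n λ_k = 1, ψ_k = id, Ψ_k(x) = (Ξ_k(x))^{λ_k} with Ξ_k ∈ 𝒢(J;l_k,L_k), L_k ≥ l_k ≥ 0, and K := λ₁l₁ − ∑_{k=2}^n λ_k(L_k(M^{k−1}−1)/(M−1) − l_k δ^{k−1}) > 0, where 0 < δ < 1 < M. Then for each G ∈ 𝒢(J; K₁δ, K₀M), with K₀ = ∑ λ_k l_k δ^{k−1} and K₁ = ∑ λ_k L_k M^{k−1}, the equation ∏_{k=1}^n Ψ_k(g^k(x)) = G(x) has a unique solution g ∈ 𝒢(J;δ,M), and the solution satisfies the Lipschitz stability estimate ‖g − g₁‖_J ≤ (d/(cK))‖G − G₁‖_J for corresponding data G₁ and solution g₁. -/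
/-!
Conjugating by `exp` (`logConj g = log ∘ g ∘ exp`) turns `Gclass c d δ M` into
`AddGclass (log c) (log d) δ M` and the equation into `∑ λ_k ξ_k(h^k t) = γ t`, with
`ξ_k = logConj Ξ_k` and `γ = logConj G`. Its left side is `iterComb h (h t)`, where
`iterComb h u = ∑ λ_k ξ_k(h^(k-1) u)` has difference quotients between `K₀ = lowerSlope` and
`K₁ = upperSlope`. Hence `h ↦ (iterComb h)⁻¹ ∘ γ` maps `AddGclass (log c) (log d) δ M` into
itself. Replacing `h` by `h'` moves `iterComb h` by at most `R ‖h - h'‖`, where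
`R = lipConst = ∑ λ_k L_k (1 + M + ⋯ + M^(k-2))`, so this map is a contraction with constant
`R / K₀ < 1` (the hypothesis is `K = K₀ - R > 0`), and Banach's theorem in `C([a, b], ℝ)` gives a
solution. The same estimate at a point where `|h - h₁|` is maximal gives
`K ‖h - h₁‖ ≤ ‖γ - γ₁‖`; this yields uniqueness and, as `log` is `1/c`-Lipschitz on `[c, ∞)` and
`exp` is `d`-Lipschitz on `(-∞, log d]`, the stability bound.
-/

/-- The class 𝒢(J;δ,M). -/
def Gclass (c d δ M : ℝ) : Set (ℝ → ℝ) :=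
  {g | ContinuousOn g (Set.Icc c d) ∧ Set.MapsTo g (Set.Icc c d) (Set.Icc c d) ∧
    g c = c ∧ g d = d ∧
    ∀ x ∈ Set.Icc c d, ∀ y ∈ Set.Icc c d, y ≤ x →
      (x / y) ^ δ ≤ g x / g y ∧ g x / g y ≤ (x / y) ^ M}

open Set Real

lemma Set.EqOn.iterate_of_mapsTo {α : Type*} {s : Set α} {f f' : α → α} (hff' : EqOn f f' s)
    (hf : MapsTo f s s) : ∀ k : ℕ, EqOn f^[k] f'^[k] s
  | 0 => fun _ _ => rfl
  | k + 1 => fun x hx => by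
    rw [Function.iterate_succ_apply', Function.iterate_succ_apply',
      ← hff'.iterate_of_mapsTo hf k hx, hff' (hf.iterate k hx)]

/-- The image of `Gclass` under conjugation by `exp`. Continuity and invariance of `[a, b]` are
omitted since they follow for `0 ≤ δ`; this makes the class closed under pointwise limits. -/
structure AddGclass (a b δ M : ℝ) (h : ℝ → ℝ) : Prop where
  map_left : h a = a
  map_right : h b = b
  slope {x y : ℝ} : x ∈ Icc a b → y ∈ Icc a b → y ≤ x →
    δ * (x - y) ≤ h x - h y ∧ h x - h y ≤ M * (x - y)

namespace AddGclass

variable {a b δ M p q : ℝ} {f g h : ℝ → ℝ} {x y : ℝ}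

lemma monotoneOn (hh : AddGclass a b δ M h) (hδ : 0 ≤ δ) : MonotoneOn h (Icc a b) :=
  fun y hy x hx hyx => by
    have := (hh.slope hx hy hyx).1
    nlinarith [mul_nonneg hδ (sub_nonneg.2 hyx)]

lemma mapsTo (hh : AddGclass a b δ M h) (hδ : 0 ≤ δ) : MapsTo h (Icc a b) (Icc a b) :=
  fun x hx => by
    have hab : a ≤ b := hx.1.trans hx.2
    constructor
    · simpa only [hh.map_left] using hh.monotoneOn hδ (left_mem_Icc.2 hab) hx hx.1
    · simpa only [hh.map_right] using hh.monotoneOn hδ hx (right_mem_Icc.2 hab) hx.2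

lemma abs_sub_le (hh : AddGclass a b δ M h) (hδ : 0 ≤ δ) (hx : x ∈ Icc a b) (hy : y ∈ Icc a b) :
    |h x - h y| ≤ M * |x - y| := by
  rcases le_total y x with hyx | hxy
  · rw [abs_of_nonneg (sub_nonneg.2 (hh.monotoneOn hδ hy hx hyx)), abs_of_nonneg (sub_nonneg.2 hyx)]
    exact (hh.slope hx hy hyx).2
  · rw [abs_sub_comm, abs_sub_comm x, abs_of_nonneg (sub_nonneg.2 (hh.monotoneOn hδ hx hy hxy)),
      abs_of_nonneg (sub_nonneg.2 hxy)]
    exact (hh.slope hy hx hxy).2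

lemma mul_abs_sub_le (hh : AddGclass a b δ M h) (hx : x ∈ Icc a b) (hy : y ∈ Icc a b) :
    δ * |x - y| ≤ |h x - h y| := by
  rcases le_total y x with hyx | hxy
  · rw [abs_of_nonneg (sub_nonneg.2 hyx)]
    exact (hh.slope hx hy hyx).1.trans (le_abs_self _)
  · rw [abs_sub_comm, abs_sub_comm (h x), abs_of_nonneg (sub_nonneg.2 hxy)]
    exact (hh.slope hy hx hxy).1.trans (le_abs_self _)

lemma continuousOn (hh : AddGclass a b δ M h) (hδ : 0 ≤ δ) : ContinuousOn h (Icc a b) := by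
  refine (LipschitzOnWith.of_dist_le_mul (K := M.toNNReal) fun x hx y hy => ?_).continuousOn
  rw [Real.dist_eq, Real.dist_eq, Real.coe_toNNReal']
  exact (hh.abs_sub_le hδ hx hy).trans (mul_le_mul_of_nonneg_right (le_max_left _ _) (abs_nonneg _))

lemma surjOn (hh : AddGclass a b δ M h) (hδ : 0 ≤ δ) (hab : a ≤ b) :
    SurjOn h (Icc a b) (Icc a b) := by
  have := intermediate_value_Icc hab (hh.continuousOn hδ)
  rwa [hh.map_left, hh.map_right] at this

lemma congr (hh : AddGclass a b δ M h) (hab : a ≤ b) (hhg : EqOn h g (Icc a b)) :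
    AddGclass a b δ M g := by
  refine ⟨?_, ?_, fun hx hy hyx => ?_⟩
  · rw [← hhg (left_mem_Icc.2 hab), hh.map_left]
  · rw [← hhg (right_mem_Icc.2 hab), hh.map_right]
  · rw [← hhg hx, ← hhg hy]
    exact hh.slope hx hy hyx

protected lemma id (hδ : δ ≤ 1) (hM : 1 ≤ M) : AddGclass a b δ M id :=
  ⟨rfl, rfl, fun {x y} _ _ hyx => by simp only [_root_.id]; constructor <;> nlinarith⟩

lemma comp (hf : AddGclass a b p q f) (hg : AddGclass a b δ M g) (hp : 0 ≤ p) (hq : 0 ≤ q)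
    (hδ : 0 ≤ δ) : AddGclass a b (p * δ) (q * M) (f ∘ g) := by
  refine ⟨by simp [hg.map_left, hf.map_left], by simp [hg.map_right, hf.map_right],
    fun {x y} hx hy hyx => ?_⟩
  obtain ⟨hg₁, hg₂⟩ := hg.slope hx hy hyx
  obtain ⟨hf₁, hf₂⟩ :=
    hf.slope (hg.mapsTo hδ hx) (hg.mapsTo hδ hy) (hg.monotoneOn hδ hy hx hyx)
  constructor
  · calc p * δ * (x - y) = p * (δ * (x - y)) := by ring
      _ ≤ p * (g x - g y) := mul_le_mul_of_nonneg_left hg₁ hp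
      _ ≤ f (g x) - f (g y) := hf₁
  · calc f (g x) - f (g y) ≤ q * (g x - g y) := hf₂
      _ ≤ q * (M * (x - y)) := mul_le_mul_of_nonneg_left hg₂ hq
      _ = q * M * (x - y) := by ring

lemma iterate (hh : AddGclass a b δ M h) (hδ : 0 ≤ δ) (hM : 0 ≤ M) :
    ∀ k : ℕ, AddGclass a b (δ ^ k) (M ^ k) h^[k]
  | 0 => by simpa using AddGclass.id (a := a) (b := b) le_rfl le_rfl
  | k + 1 => by
    rw [Function.iterate_succ, pow_succ, pow_succ]
    exact (hh.iterate hδ hM k).comp hh (pow_nonneg hδ k) (pow_nonneg hM k) hδ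

lemma weighted_sum {ι : Type*} {s : Finset ι} {w p q : ι → ℝ} {f : ι → ℝ → ℝ}
    (hw : ∀ i ∈ s, 0 ≤ w i) (hw₁ : ∑ i ∈ s, w i = 1)
    (hf : ∀ i ∈ s, AddGclass a b (p i) (q i) (f i)) :
    AddGclass a b (∑ i ∈ s, w i * p i) (∑ i ∈ s, w i * q i) fun x => ∑ i ∈ s, w i * f i x := by
  have fixed : ∀ z, (∀ i ∈ s, f i z = z) → ∑ i ∈ s, w i * f i z = z := fun z hz => by
    rw [Finset.sum_congr rfl fun i hi => by rw [hz i hi], ← Finset.sum_mul, hw₁, one_mul]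
  refine ⟨fixed a fun i hi => (hf i hi).map_left, fixed b fun i hi => (hf i hi).map_right,
    fun hx hy hyx => ?_⟩
  rw [← Finset.sum_sub_distrib, Finset.sum_mul, Finset.sum_mul]
  constructor <;> refine Finset.sum_le_sum fun i hi => ?_ <;> rw [← mul_sub, mul_assoc] <;>
    refine mul_le_mul_of_nonneg_left ?_ (hw i hi)
  exacts [((hf i hi).slope hx hy hyx).1, ((hf i hi).slope hx hy hyx).2]

lemma abs_iterate_sub_le {h₁ h₂ : ℝ → ℝ} (hh₁ : AddGclass a b δ M h₁) (hh₂ : AddGclass a b δ M h₂)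
    (hδ : 0 ≤ δ) (hM : 0 ≤ M) {S : ℝ} (hS : ∀ t ∈ Icc a b, |h₁ t - h₂ t| ≤ S) {t : ℝ}
    (ht : t ∈ Icc a b) (j : ℕ) : |h₁^[j] t - h₂^[j] t| ≤ (∑ i ∈ Finset.range j, M ^ i) * S := by
  induction j with
  | zero => simp
  | succ j ih =>
    have ht₁ := (hh₁.mapsTo hδ).iterate j ht
    have ht₂ := (hh₂.mapsTo hδ).iterate j ht
    rw [Function.iterate_succ_apply', Function.iterate_succ_apply']
    calc |h₁ (h₁^[j] t) - h₂ (h₂^[j] t)|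
        ≤ |h₁ (h₁^[j] t) - h₁ (h₂^[j] t)| + |h₁ (h₂^[j] t) - h₂ (h₂^[j] t)| :=
          _root_.abs_sub_le _ _ _
      _ ≤ M * ((∑ i ∈ Finset.range j, M ^ i) * S) + S :=
          add_le_add ((hh₁.abs_sub_le hδ ht₁ ht₂).trans (mul_le_mul_of_nonneg_left ih hM))
            (hS _ ht₂)
      _ = (∑ i ∈ Finset.range (j + 1), M ^ i) * S := by rw [geom_sum_succ]; ring

lemma isClosed_setOf : IsClosed {h | AddGclass a b δ M h} := by
  have : {h | AddGclass a b δ M h} = {h | h a = a} ∩ ({h | h b = b} ∩ ⋂ x ∈ Icc a b, ⋂ y ∈ Icc a b,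
      ⋂ (_ : y ≤ x), {h | δ * (x - y) ≤ h x - h y ∧ h x - h y ≤ M * (x - y)}) := by
    ext h
    simp only [mem_ofPred_eq, mem_inter_iff, mem_iInter]
    exact ⟨fun hh => ⟨hh.map_left, hh.map_right, fun _ hx _ hy => hh.slope hx hy⟩,
      fun ⟨h₁, h₂, h₃⟩ => ⟨h₁, h₂, fun hx hy => h₃ _ hx _ hy⟩⟩
  rw [this]
  refine (isClosed_eq (continuous_apply a) continuous_const).inter
    ((isClosed_eq (continuous_apply b) continuous_const).inter
      (isClosed_iInter fun x => isClosed_iInter fun _ => isClosed_iInter fun y =>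
        isClosed_iInter fun _ => isClosed_iInter fun _ => ?_))
  have hsub : Continuous fun h : ℝ → ℝ => h x - h y := (continuous_apply x).sub (continuous_apply y)
  exact (isClosed_le continuous_const hsub).inter (isClosed_le hsub continuous_const)

lemma invFunOn_comp {φ γ : ℝ → ℝ} (hab : a ≤ b) (hφ : AddGclass a b p q φ) (hp : 0 < p)
    (hq : 0 < q) (hδ : 0 ≤ δ) (hγ : AddGclass a b (q * δ) (p * M) γ) :
    AddGclass a b δ M (Function.invFunOn φ (Icc a b) ∘ γ) := by
  have hsurj := hφ.surjOn hp.le hab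
  have hinj : InjOn φ (Icc a b) := fun x hx y hy hxy => by
    have := hφ.mul_abs_sub_le hx hy
    rw [hxy, sub_self, abs_zero] at this
    exact sub_eq_zero.1 (abs_nonpos_iff.1 (nonpos_of_mul_nonpos_right this hp))
  have hfix : ∀ z ∈ Icc a b, φ z = z → Function.invFunOn φ (Icc a b) z = z := fun z hz hφz => by
    simpa only [hφz] using hinj.leftInvOn_invFunOn hz
  have hγmaps := hγ.mapsTo (mul_nonneg hq.le hδ)
  refine ⟨?_, ?_, fun {t s} ht hs hst => ?_⟩
  · simpa only [Function.comp_apply, hγ.map_left] using hfix a (left_mem_Icc.2 hab) hφ.map_left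
  · simpa only [Function.comp_apply, hγ.map_right] using hfix b (right_mem_Icc.2 hab) hφ.map_right
  simp only [Function.comp_apply]
  set u := Function.invFunOn φ (Icc a b) (γ t)
  set v := Function.invFunOn φ (Icc a b) (γ s)
  have hu : u ∈ Icc a b := hsurj.mapsTo_invFunOn (hγmaps ht)
  have hv : v ∈ Icc a b := hsurj.mapsTo_invFunOn (hγmaps hs)
  have hφu : φ u = γ t := hsurj.rightInvOn_invFunOn (hγmaps ht)
  have hφv : φ v = γ s := hsurj.rightInvOn_invFunOn (hγmaps hs)
  obtain ⟨hγ₁, hγ₂⟩ := hγ.slope ht hs hst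
  have hvu : v ≤ u := by
    by_contra! huv
    have := (hφ.slope hv hu huv.le).1
    rw [hφu, hφv] at this
    nlinarith [mul_nonneg (mul_nonneg hq.le hδ) (sub_nonneg.2 hst)]
  obtain ⟨hφ₁, hφ₂⟩ := hφ.slope hu hv hvu
  rw [hφu, hφv] at hφ₁ hφ₂
  exact ⟨le_of_mul_le_mul_left (by linarith) hq, le_of_mul_le_mul_left (by linarith) hp⟩

end AddGclass

namespace IterativeEquation

variable {a b δ M : ℝ} {n : ℕ} {lam l L : ℕ → ℝ} {ξ : ℕ → ℝ → ℝ}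

def iterComb (n : ℕ) (lam : ℕ → ℝ) (ξ : ℕ → ℝ → ℝ) (h : ℝ → ℝ) (u : ℝ) : ℝ :=
  ∑ k ∈ Finset.Icc 1 n, lam k * ξ k (h^[k - 1] u)

lemma sum_iterate_eq_iterComb (h : ℝ → ℝ) (t : ℝ) :
    ∑ k ∈ Finset.Icc 1 n, lam k * ξ k (h^[k] t) = iterComb n lam ξ h (h t) :=
  Finset.sum_congr rfl fun k hk => by
    rw [← Function.iterate_succ_apply, Nat.succ_eq_add_one,
      Nat.sub_add_cancel (Finset.mem_Icc.1 hk).1]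

def lowerSlope (δ : ℝ) (n : ℕ) (lam l : ℕ → ℝ) : ℝ :=
  ∑ k ∈ Finset.Icc 1 n, lam k * l k * δ ^ (k - 1)

def upperSlope (M : ℝ) (n : ℕ) (lam L : ℕ → ℝ) : ℝ :=
  ∑ k ∈ Finset.Icc 1 n, lam k * L k * M ^ (k - 1)

def lipConst (M : ℝ) (n : ℕ) (lam L : ℕ → ℝ) : ℝ :=
  ∑ k ∈ Finset.Icc 1 n, lam k * (L k * ∑ i ∈ Finset.range (k - 1), M ^ i)

structure Hyps (a b δ M : ℝ) (n : ℕ) (lam l L : ℕ → ℝ) (ξ : ℕ → ℝ → ℝ) : Prop where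
  hab : a ≤ b
  hδ : 0 ≤ δ
  hM : 0 ≤ M
  hlam : ∀ k ∈ Finset.Icc 1 n, 0 ≤ lam k
  hsum : ∑ k ∈ Finset.Icc 1 n, lam k = 1
  hl : ∀ k ∈ Finset.Icc 1 n, 0 ≤ l k
  hlL : ∀ k ∈ Finset.Icc 1 n, l k ≤ L k
  hξ : ∀ k ∈ Finset.Icc 1 n, AddGclass a b (l k) (L k) (ξ k)
  hK : lipConst M n lam L < lowerSlope δ n lam l

namespace Hyps

lemma L_nonneg (H : Hyps a b δ M n lam l L ξ) {k : ℕ} (hk : k ∈ Finset.Icc 1 n) : 0 ≤ L k :=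
  (H.hl k hk).trans (H.hlL k hk)

lemma lipConst_nonneg (H : Hyps a b δ M n lam l L ξ) : 0 ≤ lipConst M n lam L :=
  Finset.sum_nonneg fun k hk => mul_nonneg (H.hlam k hk)
    (mul_nonneg (H.L_nonneg hk) (Finset.sum_nonneg fun i _ => pow_nonneg H.hM i))

lemma lowerSlope_pos (H : Hyps a b δ M n lam l L ξ) : 0 < lowerSlope δ n lam l :=
  H.lipConst_nonneg.trans_lt H.hK

lemma upperSlope_nonneg (H : Hyps a b δ M n lam l L ξ) : 0 ≤ upperSlope M n lam L :=
  Finset.sum_nonneg fun k hk =>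
    mul_nonneg (mul_nonneg (H.hlam k hk) (H.L_nonneg hk)) (pow_nonneg H.hM _)

lemma lowerSlope_le_upperSlope (H : Hyps a b δ M n lam l L ξ) (hδM : δ ≤ M) :
    lowerSlope δ n lam l ≤ upperSlope M n lam L :=
  Finset.sum_le_sum fun k hk =>
    mul_le_mul (mul_le_mul_of_nonneg_left (H.hlL k hk) (H.hlam k hk)) (pow_le_pow_left₀ H.hδ hδM _)
      (pow_nonneg H.hδ _) (mul_nonneg (H.hlam k hk) (H.L_nonneg hk))

lemma iterComb_mem (H : Hyps a b δ M n lam l L ξ) {h : ℝ → ℝ} (hh : AddGclass a b δ M h) :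
    AddGclass a b (lowerSlope δ n lam l) (upperSlope M n lam L) (iterComb n lam ξ h) := by
  have := AddGclass.weighted_sum H.hlam H.hsum fun k hk =>
    (H.hξ k hk).comp (hh.iterate H.hδ H.hM (k - 1)) (H.hl k hk) (H.L_nonneg hk) (pow_nonneg H.hδ _)
  simp only [lowerSlope, upperSlope, mul_assoc]
  exact this

lemma abs_iterComb_sub_le (H : Hyps a b δ M n lam l L ξ) {h₁ h₂ : ℝ → ℝ}
    (hh₁ : AddGclass a b δ M h₁) (hh₂ : AddGclass a b δ M h₂) {S : ℝ}
    (hS : ∀ t ∈ Icc a b, |h₁ t - h₂ t| ≤ S) {u : ℝ} (hu : u ∈ Icc a b) :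
    |iterComb n lam ξ h₁ u - iterComb n lam ξ h₂ u| ≤ lipConst M n lam L * S := by
  rw [iterComb, iterComb, ← Finset.sum_sub_distrib, lipConst, Finset.sum_mul]
  refine (Finset.abs_sum_le_sum_abs _ _).trans (Finset.sum_le_sum fun k hk => ?_)
  have hξ := (H.hξ k hk).abs_sub_le (H.hl k hk) ((hh₁.mapsTo H.hδ).iterate (k - 1) hu)
    ((hh₂.mapsTo H.hδ).iterate (k - 1) hu)
  have hit := AddGclass.abs_iterate_sub_le hh₁ hh₂ H.hδ H.hM hS hu (k - 1)
  rw [← mul_sub, abs_mul, abs_of_nonneg (H.hlam k hk), mul_assoc, mul_assoc]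
  exact mul_le_mul_of_nonneg_left
    (hξ.trans (mul_le_mul_of_nonneg_left hit (H.L_nonneg hk))) (H.hlam k hk)

lemma lowerSlope_mul_abs_sub_le (H : Hyps a b δ M n lam l L ξ) {h₁ h₂ : ℝ → ℝ}
    (hh₁ : AddGclass a b δ M h₁) (hh₂ : AddGclass a b δ M h₂) {S : ℝ}
    (hS : ∀ t ∈ Icc a b, |h₁ t - h₂ t| ≤ S) {u₁ u₂ : ℝ}
    (hu₁ : u₁ ∈ Icc a b) (hu₂ : u₂ ∈ Icc a b) :
    lowerSlope δ n lam l * |u₁ - u₂| ≤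
      |iterComb n lam ξ h₁ u₁ - iterComb n lam ξ h₂ u₂| + lipConst M n lam L * S :=
  calc lowerSlope δ n lam l * |u₁ - u₂|
      ≤ |iterComb n lam ξ h₁ u₁ - iterComb n lam ξ h₁ u₂| :=
        (H.iterComb_mem hh₁).mul_abs_sub_le hu₁ hu₂
    _ ≤ |iterComb n lam ξ h₁ u₁ - iterComb n lam ξ h₂ u₂| +
          |iterComb n lam ξ h₁ u₂ - iterComb n lam ξ h₂ u₂| := by
        rw [abs_sub_comm (iterComb n lam ξ h₁ u₂)]; exact abs_sub_le _ _ _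
    _ ≤ _ := add_le_add le_rfl (H.abs_iterComb_sub_le hh₁ hh₂ hS hu₂)

theorem abs_sub_le_of_solves (H : Hyps a b δ M n lam l L ξ) {h h₁ γ γ₁ : ℝ → ℝ}
    (hh : AddGclass a b δ M h) (hh₁ : AddGclass a b δ M h₁)
    (heq : ∀ t ∈ Icc a b, ∑ k ∈ Finset.Icc 1 n, lam k * ξ k (h^[k] t) = γ t)
    (heq₁ : ∀ t ∈ Icc a b, ∑ k ∈ Finset.Icc 1 n, lam k * ξ k (h₁^[k] t) = γ₁ t) {ε : ℝ}
    (hγ : ∀ t ∈ Icc a b, |γ t - γ₁ t| ≤ ε) {t : ℝ} (ht : t ∈ Icc a b) :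
    |h t - h₁ t| ≤ ε / (lowerSlope δ n lam l - lipConst M n lam L) := by
  obtain ⟨t₀, ht₀, hmax⟩ := isCompact_Icc.exists_isMaxOn (nonempty_Icc.2 H.hab)
    ((hh.continuousOn H.hδ).sub (hh₁.continuousOn H.hδ)).abs
  have hS : ∀ s ∈ Icc a b, |h s - h₁ s| ≤ |h t₀ - h₁ t₀| := isMaxOn_iff.1 hmax
  have hkey := H.lowerSlope_mul_abs_sub_le hh hh₁ hS (hh.mapsTo H.hδ ht₀) (hh₁.mapsTo H.hδ ht₀)
  rw [← sum_iterate_eq_iterComb, ← sum_iterate_eq_iterComb, heq t₀ ht₀, heq₁ t₀ ht₀] at hkey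
  rw [le_div_iff₀ (sub_pos.2 H.hK)]
  calc |h t - h₁ t| * (lowerSlope δ n lam l - lipConst M n lam L)
      ≤ |h t₀ - h₁ t₀| * (lowerSlope δ n lam l - lipConst M n lam L) :=
        mul_le_mul_of_nonneg_right (hS t ht) (sub_pos.2 H.hK).le
    _ ≤ ε := by linarith [hγ t₀ ht₀]

end Hyps

noncomputable def solOp (n : ℕ) (lam : ℕ → ℝ) (ξ : ℕ → ℝ → ℝ) (a b : ℝ) (γ h : ℝ → ℝ) :
    ℝ → ℝ :=
  Function.invFunOn (iterComb n lam ξ h) (Icc a b) ∘ γ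

def restrictSet (hab : a ≤ b) (δ M : ℝ) : Set C(Icc a b, ℝ) :=
  {f | AddGclass a b δ M (IccExtend hab f)}

lemma isClosed_restrictSet (hab : a ≤ b) : IsClosed (restrictSet hab δ M) :=
  AddGclass.isClosed_setOf.preimage (continuous_pi fun _ => continuous_eval_const _)

namespace Hyps

variable {γ : ℝ → ℝ}

lemma solOp_mem (H : Hyps a b δ M n lam l L ξ)
    (hγ : AddGclass a b (upperSlope M n lam L * δ) (lowerSlope δ n lam l * M) γ) (hδM : δ ≤ M)
    {h : ℝ → ℝ} (hh : AddGclass a b δ M h) : AddGclass a b δ M (solOp n lam ξ a b γ h) :=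
  AddGclass.invFunOn_comp H.hab (H.iterComb_mem hh) H.lowerSlope_pos
    (H.lowerSlope_pos.trans_le (H.lowerSlope_le_upperSlope hδM)) H.hδ hγ

lemma solOp_spec (H : Hyps a b δ M n lam l L ξ)
    (hγ : AddGclass a b (upperSlope M n lam L * δ) (lowerSlope δ n lam l * M) γ)
    {h : ℝ → ℝ} (hh : AddGclass a b δ M h) {t : ℝ} (ht : t ∈ Icc a b) :
    solOp n lam ξ a b γ h t ∈ Icc a b ∧ iterComb n lam ξ h (solOp n lam ξ a b γ h t) = γ t := by
  have hsurj := (H.iterComb_mem hh).surjOn H.lowerSlope_pos.le H.hab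
  have hγt := hγ.mapsTo (mul_nonneg H.upperSlope_nonneg H.hδ) ht
  exact ⟨hsurj.mapsTo_invFunOn hγt, hsurj.rightInvOn_invFunOn hγt⟩

lemma abs_solOp_sub_le (H : Hyps a b δ M n lam l L ξ)
    (hγ : AddGclass a b (upperSlope M n lam L * δ) (lowerSlope δ n lam l * M) γ)
    {h₁ h₂ : ℝ → ℝ} (hh₁ : AddGclass a b δ M h₁) (hh₂ : AddGclass a b δ M h₂) {S : ℝ}
    (hS : ∀ t ∈ Icc a b, |h₁ t - h₂ t| ≤ S) {t : ℝ} (ht : t ∈ Icc a b) :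
    |solOp n lam ξ a b γ h₁ t - solOp n lam ξ a b γ h₂ t| ≤
      lipConst M n lam L / lowerSlope δ n lam l * S := by
  obtain ⟨hu₁, heq₁⟩ := H.solOp_spec hγ hh₁ ht
  obtain ⟨hu₂, heq₂⟩ := H.solOp_spec hγ hh₂ ht
  have key := H.lowerSlope_mul_abs_sub_le hh₁ hh₂ hS hu₁ hu₂
  rw [heq₁, heq₂, sub_self, abs_zero, zero_add] at key
  rw [div_mul_eq_mul_div, le_div_iff₀ H.lowerSlope_pos]
  linarith

noncomputable def solOpC (H : Hyps a b δ M n lam l L ξ)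
    (hγ : AddGclass a b (upperSlope M n lam L * δ) (lowerSlope δ n lam l * M) γ) (hδM : δ ≤ M)
    (f : restrictSet H.hab δ M) : restrictSet H.hab δ M :=
  ⟨⟨(Icc a b).domRestrict (solOp n lam ξ a b γ (IccExtend H.hab f)),
      ((H.solOp_mem hγ hδM f.2).continuousOn H.hδ).domRestrict⟩,
    (H.solOp_mem hγ hδM f.2).congr H.hab fun _ ht => by rw [IccExtend_of_mem H.hab _ ht]; rfl⟩

lemma contractingWith_solOpC (H : Hyps a b δ M n lam l L ξ)
    (hγ : AddGclass a b (upperSlope M n lam L * δ) (lowerSlope δ n lam l * M) γ) (hδM : δ ≤ M) :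
    ContractingWith (lipConst M n lam L / lowerSlope δ n lam l).toNNReal (H.solOpC hγ hδM) := by
  have hr : 0 ≤ lipConst M n lam L / lowerSlope δ n lam l :=
    div_nonneg H.lipConst_nonneg H.lowerSlope_pos.le
  refine ⟨Real.toNNReal_lt_one.2 ((div_lt_one H.lowerSlope_pos).2 H.hK),
    LipschitzWith.of_dist_le_mul fun f g => ?_⟩
  rw [Real.coe_toNNReal _ hr, Subtype.dist_eq, Subtype.dist_eq,
    ContinuousMap.dist_le (mul_nonneg hr dist_nonneg)]
  intro t
  rw [Real.dist_eq]
  refine H.abs_solOp_sub_le hγ f.2 g.2 (S := dist (f : C(Icc a b, ℝ)) g) (fun s _ => ?_) t.2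
  rw [← Real.dist_eq]
  exact ContinuousMap.dist_apply_le_dist _

theorem exists_solution (H : Hyps a b δ M n lam l L ξ)
    (hγ : AddGclass a b (upperSlope M n lam L * δ) (lowerSlope δ n lam l * M) γ) (hδ1 : δ ≤ 1)
    (hM1 : 1 ≤ M) :
    ∃ h, AddGclass a b δ M h ∧
      ∀ t ∈ Icc a b, ∑ k ∈ Finset.Icc 1 n, lam k * ξ k (h^[k] t) = γ t := by
  have hδM := hδ1.trans hM1
  have : Nonempty (restrictSet H.hab δ M) :=
    ⟨⟨⟨Subtype.val, continuous_subtype_val⟩,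
      (AddGclass.id hδ1 hM1).congr H.hab fun _ ht => by rw [IccExtend_of_mem H.hab _ ht]; rfl⟩⟩
  have : CompleteSpace (restrictSet H.hab δ M) :=
    (isClosed_restrictSet H.hab).isComplete.completeSpace_coe
  have hT := H.contractingWith_solOpC hγ hδM
  set f := ContractingWith.fixedPoint _ hT
  have hfix : ∀ t ∈ Icc a b,
      solOp n lam ξ a b γ (IccExtend H.hab f) t = IccExtend H.hab f t := fun t ht => by
    rw [IccExtend_of_mem H.hab _ ht]
    exact congrArg (fun u : restrictSet H.hab δ M => (u : C(Icc a b, ℝ)) ⟨t, ht⟩)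
      hT.fixedPoint_isFixedPt
  refine ⟨IccExtend H.hab f, f.2, fun t ht => ?_⟩
  rw [sum_iterate_eq_iterComb, ← hfix t ht]
  exact (H.solOp_spec hγ f.2 ht).2

end Hyps

end IterativeEquation

noncomputable def logConj (g : ℝ → ℝ) (t : ℝ) : ℝ := log (g (exp t))

noncomputable def expConj (h : ℝ → ℝ) (x : ℝ) : ℝ := exp (h (log x))

section Conjugation

variable {c d : ℝ} {g h : ℝ → ℝ}

lemma semiconj_exp_expConj (h : ℝ → ℝ) : Function.Semiconj exp h (expConj h) :=
  fun t => by simp [expConj]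

lemma expConj_logConj_of_pos {x : ℝ} (hx : 0 < x) (hgx : 0 < g x) :
    expConj (logConj g) x = g x := by
  simp [expConj, logConj, exp_log hx, exp_log hgx]

lemma exp_mem_Icc_iff (hc : 0 < c) (hd : 0 < d) {t : ℝ} :
    exp t ∈ Icc c d ↔ t ∈ Icc (log c) (log d) := by
  rw [mem_Icc, mem_Icc, le_log_iff_exp_le hd, log_le_iff_le_exp hc]

lemma log_mem_Icc (hc : 0 < c) {x : ℝ} (hx : x ∈ Icc c d) : log x ∈ Icc (log c) (log d) :=
  ⟨log_le_log hc hx.1, log_le_log (hc.trans_le hx.1) hx.2⟩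

lemma mapsTo_logConj (hc : 0 < c) (hd : 0 < d) (hg : MapsTo g (Icc c d) (Icc c d)) :
    MapsTo (logConj g) (Icc (log c) (log d)) (Icc (log c) (log d)) :=
  fun _ ht => log_mem_Icc hc (hg ((exp_mem_Icc_iff hc hd).2 ht))

lemma logConj_mem (hc : 0 < c) (hcd : c ≤ d) {A B : ℝ} (hg : g ∈ Gclass c d A B) :
    AddGclass (log c) (log d) A B (logConj g) := by
  have hd := hc.trans_le hcd
  obtain ⟨-, hmaps, hgc, hgd, hratio⟩ := hg
  refine ⟨by simp [logConj, exp_log hc, hgc], by simp [logConj, exp_log hd, hgd],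
    fun {x y} hx hy hyx => ?_⟩
  have hx' := (exp_mem_Icc_iff hc hd).2 hx
  have hy' := (exp_mem_Icc_iff hc hd).2 hy
  have hgx := hc.trans_le (hmaps hx').1
  have hgy := hc.trans_le (hmaps hy').1
  obtain ⟨h₁, h₂⟩ := hratio _ hx' _ hy' (exp_le_exp.2 hyx)
  rw [← exp_sub, ← exp_mul, ← le_log_iff_exp_le (div_pos hgx hgy)] at h₁
  rw [← exp_sub, ← exp_mul, ← log_le_iff_le_exp (div_pos hgx hgy)] at h₂
  rw [log_div hgx.ne' hgy.ne'] at h₁ h₂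
  exact ⟨by simpa only [logConj, mul_comm] using h₁, by simpa only [logConj, mul_comm] using h₂⟩

lemma expConj_mem (hc : 0 < c) (hcd : c ≤ d) {δ M : ℝ} (hh : AddGclass (log c) (log d) δ M h)
    (hδ : 0 ≤ δ) : expConj h ∈ Gclass c d δ M := by
  have hd := hc.trans_le hcd
  have hlog : MapsTo log (Icc c d) (Icc (log c) (log d)) := fun _ hx => log_mem_Icc hc hx
  refine ⟨continuous_exp.comp_continuousOn ((hh.continuousOn hδ).comp
      (continuousOn_log.mono fun x hx => (hc.trans_le hx.1).ne') hlog),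
    fun x hx => (exp_mem_Icc_iff hc hd).2 (hh.mapsTo hδ (hlog hx)),
    by simp [expConj, hh.map_left, exp_log hc], by simp [expConj, hh.map_right, exp_log hd],
    fun x hx y hy hyx => ?_⟩
  have hx0 := hc.trans_le hx.1
  have hy0 := hc.trans_le hy.1
  obtain ⟨h₁, h₂⟩ := hh.slope (hlog hx) (hlog hy) (log_le_log hy0 hyx)
  rw [expConj, expConj, ← exp_sub, rpow_def_of_pos (div_pos hx0 hy0),
    rpow_def_of_pos (div_pos hx0 hy0), exp_le_exp, exp_le_exp, log_div hx0.ne' hy0.ne',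
    mul_comm, mul_comm _ M]
  exact ⟨h₁, h₂⟩

variable {Ξ : ℕ → ℝ → ℝ} {lam : ℕ → ℝ} {s : Finset ℕ}

lemma prod_rpow_expConj_iterate (hc : 0 < c) (hd : 0 < d)
    (hh : MapsTo h (Icc (log c) (log d)) (Icc (log c) (log d)))
    (hΞ : ∀ k ∈ s, ∀ x ∈ Icc c d, 0 < Ξ k x) {t : ℝ} (ht : t ∈ Icc (log c) (log d)) :
    ∏ k ∈ s, Ξ k ((expConj h)^[k] (exp t)) ^ lam k =
      exp (∑ k ∈ s, lam k * logConj (Ξ k) (h^[k] t)) := by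
  rw [exp_sum]
  refine Finset.prod_congr rfl fun k hk => ?_
  rw [← (semiconj_exp_expConj h).iterate_right k t,
    rpow_def_of_pos (hΞ k hk _ ((exp_mem_Icc_iff hc hd).2 (hh.iterate k ht))), mul_comm, logConj]

lemma prod_eq_of_sum_logConj_eq (hc : 0 < c) (hd : 0 < d)
    (hh : MapsTo h (Icc (log c) (log d)) (Icc (log c) (log d)))
    (hΞ : ∀ k ∈ s, ∀ x ∈ Icc c d, 0 < Ξ k x) {G : ℝ → ℝ} (hG : ∀ x ∈ Icc c d, 0 < G x)
    (heq : ∀ t ∈ Icc (log c) (log d), ∑ k ∈ s, lam k * logConj (Ξ k) (h^[k] t) = logConj G t)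
    {x : ℝ} (hx : x ∈ Icc c d) :
    ∏ k ∈ s, Ξ k ((expConj h)^[k] x) ^ lam k = G x := by
  have hx0 := hc.trans_le hx.1
  have := prod_rpow_expConj_iterate hc hd hh hΞ (log_mem_Icc hc hx) (lam := lam)
  rw [exp_log hx0, heq _ (log_mem_Icc hc hx), logConj, exp_log hx0, exp_log (hG x hx)] at this
  exact this

lemma sum_logConj_eq_of_prod_eq (hc : 0 < c) (hd : 0 < d) (hg : MapsTo g (Icc c d) (Icc c d))
    (hΞ : ∀ k ∈ s, ∀ x ∈ Icc c d, 0 < Ξ k x) {G : ℝ → ℝ}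
    (heq : ∀ x ∈ Icc c d, ∏ k ∈ s, Ξ k (g^[k] x) ^ lam k = G x) {t : ℝ}
    (ht : t ∈ Icc (log c) (log d)) :
    ∑ k ∈ s, lam k * logConj (Ξ k) ((logConj g)^[k] t) = logConj G t := by
  have hx := (exp_mem_Icc_iff hc hd).2 ht
  have hgg : EqOn g (expConj (logConj g)) (Icc c d) := fun x hx =>
    (expConj_logConj_of_pos (hc.trans_le hx.1) (hc.trans_le (hg hx).1)).symm
  have := prod_rpow_expConj_iterate hc hd (mapsTo_logConj hc hd hg) hΞ ht (lam := lam)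
  rw [← Finset.prod_congr rfl fun k _ => congrArg (fun y => Ξ k y ^ lam k)
    (hgg.iterate_of_mapsTo hg k hx), heq _ hx] at this
  rw [logConj, this, log_exp]

lemma abs_log_sub_log_le (hc : 0 < c) {x y : ℝ} (hx : c ≤ x) (hy : c ≤ y) :
    |log x - log y| ≤ |x - y| / c := by
  have := (convex_Ici c).norm_image_sub_le_of_norm_deriv_le (f := log) (C := c⁻¹)
    (fun z hz => differentiableAt_log (hc.trans_le hz).ne')
    (fun z hz => by
      rw [deriv_log, norm_inv, norm_of_nonneg (hc.trans_le hz).le]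
      exact inv_anti₀ hc hz) hy hx
  rwa [Real.norm_eq_abs, Real.norm_eq_abs, ← div_eq_inv_mul] at this

lemma abs_exp_sub_exp_le (hd : 0 < d) {x y : ℝ} (hx : x ≤ log d) (hy : y ≤ log d) :
    |exp x - exp y| ≤ d * |x - y| := by
  have := (convex_Iic (log d)).norm_image_sub_le_of_norm_deriv_le (f := exp) (C := d)
    (fun z _ => differentiableAt_exp)
    (fun z hz => by
      rw [Real.deriv_exp, norm_of_nonneg (exp_pos z).le, ← exp_log hd]
      exact exp_le_exp.2 hz) hy hx
  rwa [Real.norm_eq_abs, Real.norm_eq_abs] at this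

end Conjugation

namespace IterativeEquation

variable {c d δ M : ℝ} {n : ℕ} {lam l L : ℕ → ℝ} {Ξ : ℕ → ℝ → ℝ}

lemma lowerSlope_sub_lipConst (hn : 1 ≤ n) (hM : M ≠ 1) :
    lowerSlope δ n lam l - lipConst M n lam L = lam 1 * l 1 -
      ∑ k ∈ Finset.Icc 2 n, lam k * (L k * (M ^ (k - 1) - 1) / (M - 1) - l k * δ ^ (k - 1)) := by
  rw [lowerSlope, lipConst, ← Finset.sum_sub_distrib,
    ← Finset.insert_Icc_add_one_left_eq_Icc hn, Finset.sum_insert (by simp)]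
  simp only [geom_sum_eq hM, Nat.reduceAdd, tsub_self, pow_zero, sub_self, zero_div, mul_zero,
    mul_one, neg_zero, add_zero, sub_eq_add_neg (lam 1 * l 1), ← Finset.sum_neg_distrib]
  exact congrArg _ (Finset.sum_congr rfl fun k _ => by ring)

theorem abs_sub_le_of_prod_eq (hc : 0 < c) (hcd : c ≤ d)
    (H : Hyps (log c) (log d) δ M n lam l L fun k => logConj (Ξ k))
    (hΞ : ∀ k ∈ Finset.Icc 1 n, ∀ x ∈ Icc c d, 0 < Ξ k x) {g g₁ G G₁ : ℝ → ℝ}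
    (hg : g ∈ Gclass c d δ M) (hg₁ : g₁ ∈ Gclass c d δ M)
    (hG : MapsTo G (Icc c d) (Icc c d)) (hG₁ : MapsTo G₁ (Icc c d) (Icc c d))
    (heq : ∀ x ∈ Icc c d, ∏ k ∈ Finset.Icc 1 n, Ξ k (g^[k] x) ^ lam k = G x)
    (heq₁ : ∀ x ∈ Icc c d, ∏ k ∈ Finset.Icc 1 n, Ξ k (g₁^[k] x) ^ lam k = G₁ x) {ε : ℝ}
    (hGG : ∀ x ∈ Icc c d, |G x - G₁ x| ≤ ε) {x : ℝ} (hx : x ∈ Icc c d) :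
    |g x - g₁ x| ≤ d / (c * (lowerSlope δ n lam l - lipConst M n lam L)) * ε := by
  have hd := hc.trans_le hcd
  have hx0 := hc.trans_le hx.1
  have ht := log_mem_Icc hc hx
  have hγ : ∀ t ∈ Icc (log c) (log d), |logConj G t - logConj G₁ t| ≤ ε / c := fun t ht => by
    have hy := (exp_mem_Icc_iff hc hd).2 ht
    exact (abs_log_sub_log_le hc (hG hy).1 (hG₁ hy).1).trans
      (div_le_div_of_nonneg_right (hGG _ hy) hc.le)
  have hh := logConj_mem hc hcd hg
  have hh₁ := logConj_mem hc hcd hg₁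
  have hadd := H.abs_sub_le_of_solves hh hh₁
    (fun t ht => sum_logConj_eq_of_prod_eq hc hd hg.2.1 hΞ heq ht)
    (fun t ht => sum_logConj_eq_of_prod_eq hc hd hg₁.2.1 hΞ heq₁ ht) hγ ht
  rw [← expConj_logConj_of_pos hx0 (hc.trans_le (hg.2.1 hx).1),
    ← expConj_logConj_of_pos hx0 (hc.trans_le (hg₁.2.1 hx).1)]
  calc |expConj (logConj g) x - expConj (logConj g₁) x|
      ≤ d * |logConj g (log x) - logConj g₁ (log x)| :=
        abs_exp_sub_exp_le hd (hh.mapsTo H.hδ ht).2 (hh₁.mapsTo H.hδ ht).2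
    _ ≤ d * (ε / c / (lowerSlope δ n lam l - lipConst M n lam L)) :=
        mul_le_mul_of_nonneg_left hadd hd.le
    _ = d / (c * (lowerSlope δ n lam l - lipConst M n lam L)) * ε := by
        rw [div_div, mul_div_assoc', div_mul_eq_mul_div]

end IterativeEquation

open IterativeEquation

theorem stmt_3_general (c d δ M : ℝ) (n : ℕ) (hn : 1 ≤ n) (hc : 0 < c) (hcd : c < d)
    (hδ0 : 0 < δ) (hδ1 : δ < 1) (hM : 1 < M)
    (lam l L : ℕ → ℝ) (Ξ : ℕ → ℝ → ℝ) (G : ℝ → ℝ)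
    (hlam1 : 0 < lam 1)
    (hlamk : ∀ k, 2 ≤ k → k ≤ n → 0 ≤ lam k)
    (hsum : ∑ k ∈ Finset.Icc 1 n, lam k = 1)
    (hlL : ∀ k, 1 ≤ k → k ≤ n → 0 ≤ l k ∧ l k ≤ L k)
    (hΞ : ∀ k, 1 ≤ k → k ≤ n → Ξ k ∈ Gclass c d (l k) (L k))
    (hK : 0 < lam 1 * l 1 -
      ∑ k ∈ Finset.Icc 2 n, lam k * (L k * (M ^ (k - 1) - 1) / (M - 1) - l k * δ ^ (k - 1)))
    (hG : G ∈ Gclass c d ((∑ k ∈ Finset.Icc 1 n, lam k * L k * M ^ (k - 1)) * δ)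
          ((∑ k ∈ Finset.Icc 1 n, lam k * l k * δ ^ (k - 1)) * M)) :
    ∃ g, (g ∈ Gclass c d δ M ∧
        ∀ x ∈ Set.Icc c d, ∏ k ∈ Finset.Icc 1 n, (Ξ k (g^[k] x)) ^ lam k = G x) ∧
      (∀ g', g' ∈ Gclass c d δ M →
        (∀ x ∈ Set.Icc c d, ∏ k ∈ Finset.Icc 1 n, (Ξ k (g'^[k] x)) ^ lam k = G x) →
        Set.EqOn g' g (Set.Icc c d)) ∧
      (∀ G₁ g₁,
        G₁ ∈ Gclass c d ((∑ k ∈ Finset.Icc 1 n, lam k * L k * M ^ (k - 1)) * δ)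
              ((∑ k ∈ Finset.Icc 1 n, lam k * l k * δ ^ (k - 1)) * M) →
        g₁ ∈ Gclass c d δ M →
        (∀ x ∈ Set.Icc c d, ∏ k ∈ Finset.Icc 1 n, (Ξ k (g₁^[k] x)) ^ lam k = G₁ x) →
        ∀ ε, 0 ≤ ε → (∀ x ∈ Set.Icc c d, |G x - G₁ x| ≤ ε) →
          ∀ x ∈ Set.Icc c d,
            |g x - g₁ x| ≤ d / (c * (lam 1 * l 1 -
              ∑ k ∈ Finset.Icc 2 n,
                lam k * (L k * (M ^ (k - 1) - 1) / (M - 1) - l k * δ ^ (k - 1)))) * ε) := by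
  have hd := hc.trans hcd
  have hlam : ∀ k ∈ Finset.Icc 1 n, 0 ≤ lam k := fun k hk => by
    obtain ⟨hk₁, hk₂⟩ := Finset.mem_Icc.1 hk
    rcases hk₁.eq_or_lt with rfl | hk₁
    exacts [hlam1.le, hlamk k hk₁ hk₂]
  have hlL' k (hk : k ∈ Finset.Icc 1 n) := hlL k (Finset.mem_Icc.1 hk).1 (Finset.mem_Icc.1 hk).2
  have hΞ' k (hk : k ∈ Finset.Icc 1 n) := hΞ k (Finset.mem_Icc.1 hk).1 (Finset.mem_Icc.1 hk).2
  have hΞpos : ∀ k ∈ Finset.Icc 1 n, ∀ x ∈ Icc c d, 0 < Ξ k x := fun k hk x hx =>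
    hc.trans_le ((hΞ' k hk).2.1 hx).1
  have hKeq := lowerSlope_sub_lipConst (δ := δ) (lam := lam) (l := l) (L := L) hn hM.ne'
  have H : Hyps (log c) (log d) δ M n lam l L fun k => logConj (Ξ k) :=
    ⟨log_le_log hc hcd.le, hδ0.le, by linarith, hlam, hsum, fun k hk => (hlL' k hk).1,
      fun k hk => (hlL' k hk).2, fun k hk => logConj_mem hc hcd.le (hΞ' k hk), by linarith⟩
  obtain ⟨h, hh, heq⟩ := H.exists_solution (logConj_mem hc hcd.le hG) hδ1.le hM.le
  have hg := expConj_mem hc hcd.le hh hδ0.le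
  have hsol (x) (hx : x ∈ Icc c d) :=
    prod_eq_of_sum_logConj_eq hc hd (hh.mapsTo hδ0.le) hΞpos
      (fun x hx => hc.trans_le (hG.2.1 hx).1) heq hx
  refine ⟨expConj h, ⟨hg, hsol⟩, fun g' hg' heq' x hx => ?_,
    fun G₁ g₁ hG₁ hg₁ heq₁ ε _ hGG x hx => ?_⟩
  · have := abs_sub_le_of_prod_eq hc hcd.le H hΞpos hg' hg hG.2.1 hG.2.1 heq' hsol (ε := 0)
      (fun x _ => by simp) hx
    rwa [mul_zero, abs_nonpos_iff, sub_eq_zero] at this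
  · rw [← hKeq]
    exact abs_sub_le_of_prod_eq hc hcd.le H hΞpos hg hg₁ hG.2.1 hG₁.2.1 hsol heq₁ hGG hx

/-- existence, uniqueness and Lipschitz stability of the solution of
∏_{k=1}^n (Ξ_k(g^k(x)))^{λ_k} = G(x) in 𝒢(J;δ,M). -/
theorem stmt_3 (c d δ M : ℝ) (n : ℕ) (hn : 1 ≤ n) (hc : 0 < c) (hcd : c < d)
    (hδ0 : 0 < δ) (hδ1 : δ < 1) (hM : 1 < M)
    (lam l L : ℕ → ℝ) (Ξ : ℕ → ℝ → ℝ) (G : ℝ → ℝ)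
    (hlam1 : 0 < lam 1) (hlam1' : lam 1 < 1)
    (hlamk : ∀ k, 2 ≤ k → k ≤ n → 0 ≤ lam k)
    (hsum : ∑ k ∈ Finset.Icc 1 n, lam k = 1)
    (hlL : ∀ k, 1 ≤ k → k ≤ n → 0 ≤ l k ∧ l k ≤ L k)
    (hΞ : ∀ k, 1 ≤ k → k ≤ n → Ξ k ∈ Gclass c d (l k) (L k))
    (hK : 0 < lam 1 * l 1 -
      ∑ k ∈ Finset.Icc 2 n, lam k * (L k * (M ^ (k - 1) - 1) / (M - 1) - l k * δ ^ (k - 1)))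
    (hG : G ∈ Gclass c d ((∑ k ∈ Finset.Icc 1 n, lam k * L k * M ^ (k - 1)) * δ)
          ((∑ k ∈ Finset.Icc 1 n, lam k * l k * δ ^ (k - 1)) * M)) :
    ∃ g, (g ∈ Gclass c d δ M ∧
        ∀ x ∈ Set.Icc c d, ∏ k ∈ Finset.Icc 1 n, (Ξ k (g^[k] x)) ^ lam k = G x) ∧
      (∀ g', g' ∈ Gclass c d δ M →
        (∀ x ∈ Set.Icc c d, ∏ k ∈ Finset.Icc 1 n, (Ξ k (g'^[k] x)) ^ lam k = G x) →
        Set.EqOn g' g (Set.Icc c d)) ∧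
      (∀ G₁ g₁,
        G₁ ∈ Gclass c d ((∑ k ∈ Finset.Icc 1 n, lam k * L k * M ^ (k - 1)) * δ)
              ((∑ k ∈ Finset.Icc 1 n, lam k * l k * δ ^ (k - 1)) * M) →
        g₁ ∈ Gclass c d δ M →
        (∀ x ∈ Set.Icc c d, ∏ k ∈ Finset.Icc 1 n, (Ξ k (g₁^[k] x)) ^ lam k = G₁ x) →
        ∀ ε, 0 ≤ ε → (∀ x ∈ Set.Icc c d, |G x - G₁ x| ≤ ε) →
          ∀ x ∈ Set.Icc c d,
            |g x - g₁ x| ≤ d / (c * (lam 1 * l 1 -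
              ∑ k ∈ Finset.Icc 2 n,
                lam k * (L k * (M ^ (k - 1) - 1) / (M - 1) - l k * δ ^ (k - 1)))) * ε) :=
  stmt_3_general c d δ M n hn hc hcd hδ0 hδ1 hM lam l L Ξ G hlam1 hlamk hsum hlL hΞ hK hG
end

section
/- Under the setting: J = [c,d] with d > max{0,c}, δ ∈ (0,d]∩[c,d], λ > 0, λ₁ ≤ 1, λ_k ≤ 0 for 2 ≤ k ≤ n with ∑_{k=1}^n λ_k = λ; ψ₁ = id and ψ_k order-preserving self-maps of J; Ψ₁(x) = x^{λ₁} on [δ,d] and Ψ_k(x) = (Ξ_k(x))^{λ_k} with Ξ_k order-preserving self-maps of [δ,d]; and G an order-preserving self-map of J with G(x) ≥ δ for all x, G(c) ≥ δ^λ, G(d) ≤ d^λ. Then the set of solutions g of ∏_{k=1}^n Ψ_k(g^k(ψ_k(x))) = G(x) in 𝒢_op(J;δ) is nonempty, and there exist a minimum solution g_* and a maximum solution g^* in 𝒢_op(J;δ). -/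
open Set Function

namespace Stmt12Aux

lemma iter_mem {g : ℝ → ℝ} {J : Set ℝ} (hg : Set.MapsTo g J J) {y : ℝ} (hy : y ∈ J) :
    ∀ k, g^[k] y ∈ J := by
  intro k
  induction k with
  | zero => simpa using hy
  | succ k ih => rw [Function.iterate_succ_apply']; exact hg ih

lemma iter_congr {g₁ g₂ : ℝ → ℝ} {J : Set ℝ} (h : Set.EqOn g₁ g₂ J)
    (hg : Set.MapsTo g₁ J J) {y : ℝ} (hy : y ∈ J) :
    ∀ k, g₁^[k] y = g₂^[k] y := by
  intro k
  induction k with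
  | zero => simp
  | succ k ih =>
    rw [Function.iterate_succ_apply', Function.iterate_succ_apply', ← ih]
    exact h (iter_mem hg hy k)

lemma iter_mono {g : ℝ → ℝ} {J : Set ℝ} (hm : MonotoneOn g J) (hg : Set.MapsTo g J J)
    {x y : ℝ} (hx : x ∈ J) (hy : y ∈ J) (hxy : x ≤ y) :
    ∀ k, g^[k] x ≤ g^[k] y := by
  intro k
  induction k with
  | zero => simpa using hxy
  | succ k ih =>
    rw [Function.iterate_succ_apply', Function.iterate_succ_apply']
    exact hm (iter_mem hg hx k) (iter_mem hg hy k) ih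

lemma iter_le {g g' : ℝ → ℝ} {J : Set ℝ} (hle : ∀ x ∈ J, g x ≤ g' x)
    (hm' : MonotoneOn g' J) (hg : Set.MapsTo g J J) (hg' : Set.MapsTo g' J J)
    {y : ℝ} (hy : y ∈ J) : ∀ k, g^[k] y ≤ g'^[k] y := by
  intro k
  induction k with
  | zero => exact le_rfl
  | succ k ih =>
    rw [Function.iterate_succ_apply', Function.iterate_succ_apply']
    calc g (g^[k] y) ≤ g' (g^[k] y) := hle _ (iter_mem hg hy k)
      _ ≤ g' (g'^[k] y) := hm' (iter_mem hg hy k) (iter_mem hg' hy k) ih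

/-- extension of a lattice element to a real function -/
noncomputable def Ffun (c d δ : ℝ) (f : (Set.Icc c d) →o (Set.Icc δ d)) (x : ℝ) : ℝ :=
  if h : x ∈ Set.Icc c d then (f ⟨x, h⟩ : ℝ) else δ

/-- the fixed point operator, at the level of real functions -/
noncomputable def Tfun (c d δ : ℝ) (n : ℕ) (lam : ℕ → ℝ) (ψ Ξ : ℕ → ℝ → ℝ) (G : ℝ → ℝ)
    (f : (Set.Icc c d) →o (Set.Icc δ d)) (x : ℝ) : ℝ :=
  (Ffun c d δ f x) ^ (1 - lam 1) *
    (∏ k ∈ Finset.Icc 2 n, (Ξ k ((Ffun c d δ f)^[k] (ψ k x))) ^ (-(lam k))) * G x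

end Stmt12Aux

open Stmt12Aux

/-- existence of solutions of ∏_{k=1}^n Ψ_k(g^k(ψ_k(x))) = G(x) in
𝒢_op(J;δ), together with a minimum solution g_* and a maximum solution g^*. -/
theorem stmt_12 (c d δ lamT : ℝ) (n : ℕ) (hn : 1 ≤ n)
    (hd : max 0 c < d) (hδ0 : 0 < δ) (hδc : c ≤ δ) (hδd : δ ≤ d)
    (lam : ℕ → ℝ) (hlamT : 0 < lamT) (hlam1 : lam 1 ≤ 1)
    (hlamk : ∀ k, 2 ≤ k → k ≤ n → lam k ≤ 0)
    (hsum : ∑ k ∈ Finset.Icc 1 n, lam k = lamT)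
    (ψ Ψ Ξ : ℕ → ℝ → ℝ)
    (hψ1 : ∀ x ∈ Set.Icc c d, ψ 1 x = x)
    (hψ : ∀ k, 2 ≤ k → k ≤ n →
      MonotoneOn (ψ k) (Set.Icc c d) ∧ Set.MapsTo (ψ k) (Set.Icc c d) (Set.Icc c d))
    (hΨ1 : ∀ x ∈ Set.Icc δ d, Ψ 1 x = x ^ lam 1)
    (hΞ : ∀ k, 2 ≤ k → k ≤ n →
      MonotoneOn (Ξ k) (Set.Icc δ d) ∧ Set.MapsTo (Ξ k) (Set.Icc δ d) (Set.Icc δ d))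
    (hΨk : ∀ k, 2 ≤ k → k ≤ n → ∀ x ∈ Set.Icc δ d, Ψ k x = (Ξ k x) ^ lam k)
    (G : ℝ → ℝ) (hG : MonotoneOn G (Set.Icc c d))
    (hGmaps : Set.MapsTo G (Set.Icc c d) (Set.Icc c d))
    (hGδ : ∀ x ∈ Set.Icc c d, δ ≤ G x)
    (hGc : δ ^ lamT ≤ G c) (hGd : G d ≤ d ^ lamT) :
    ∃ gmin gmax : ℝ → ℝ,
      (MonotoneOn gmin (Set.Icc c d) ∧ Set.MapsTo gmin (Set.Icc c d) (Set.Icc c d) ∧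
        (∀ x ∈ Set.Icc c d, δ ≤ gmin x) ∧
        ∀ x ∈ Set.Icc c d, ∏ k ∈ Finset.Icc 1 n, Ψ k (gmin^[k] (ψ k x)) = G x) ∧
      (MonotoneOn gmax (Set.Icc c d) ∧ Set.MapsTo gmax (Set.Icc c d) (Set.Icc c d) ∧
        (∀ x ∈ Set.Icc c d, δ ≤ gmax x) ∧
        ∀ x ∈ Set.Icc c d, ∏ k ∈ Finset.Icc 1 n, Ψ k (gmax^[k] (ψ k x)) = G x) ∧
      (∀ g : ℝ → ℝ,
        MonotoneOn g (Set.Icc c d) → Set.MapsTo g (Set.Icc c d) (Set.Icc c d) →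
        (∀ x ∈ Set.Icc c d, δ ≤ g x) →
        (∀ x ∈ Set.Icc c d, ∏ k ∈ Finset.Icc 1 n, Ψ k (g^[k] (ψ k x)) = G x) →
        ∀ x ∈ Set.Icc c d, gmin x ≤ g x ∧ g x ≤ gmax x) := by
  classical
  haveI : Fact (δ ≤ d) := ⟨hδd⟩
  letI LC : CompleteLattice ((Set.Icc c d) →o (Set.Icc δ d)) := inferInstance
  have hd0 : (0:ℝ) < d := lt_of_le_of_lt (le_max_left _ _) hd
  have hcd : c ≤ d := hδc.trans hδd
  have hIJ : Set.Icc δ d ⊆ Set.Icc c d := Set.Icc_subset_Icc hδc le_rfl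
  have hcJ : c ∈ Set.Icc c d := ⟨le_rfl, hcd⟩
  have hdJ : d ∈ Set.Icc c d := ⟨hcd, le_rfl⟩
  -- splitting of the index set
  have h1notin : (1:ℕ) ∉ Finset.Icc 2 n := by simp
  have hsplit : Finset.Icc 1 n = insert 1 (Finset.Icc 2 n) := by
    ext m; simp only [Finset.mem_Icc, Finset.mem_insert]; omega
  have hmem2 : ∀ k, k ∈ Finset.Icc 2 n → 2 ≤ k ∧ k ≤ n := by
    intro k hk; simpa [Finset.mem_Icc] using hk
  have hsum2 : ∑ k ∈ Finset.Icc 2 n, lam k = lamT - lam 1 := by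
    rw [hsplit, Finset.sum_insert h1notin] at hsum; linarith
  have hexp2 : ∀ k ∈ Finset.Icc 2 n, (0:ℝ) ≤ -(lam k) := by
    intro k hk
    obtain ⟨h2, hkn⟩ := hmem2 k hk
    linarith [hlamk k h2 hkn]
  -- basic properties of Ffun
  have hF_memI : ∀ (f : (Set.Icc c d) →o (Set.Icc δ d)) (x : ℝ),
      Ffun c d δ f x ∈ Set.Icc δ d := by
    intro f x
    unfold Stmt12Aux.Ffun
    split
    · exact (f _).2
    · exact ⟨le_rfl, hδd⟩
  have hF_eq : ∀ (f : (Set.Icc c d) →o (Set.Icc δ d)) (x : ℝ) (hx : x ∈ Set.Icc c d),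
      Ffun c d δ f x = (f ⟨x, hx⟩ : ℝ) := by
    intro f x hx; unfold Stmt12Aux.Ffun; rw [dif_pos hx]
  have hF_mapsJ : ∀ f, Set.MapsTo (Ffun c d δ f) (Set.Icc c d) (Set.Icc c d) :=
    fun f x _ => hIJ (hF_memI f x)
  have hF_mono : ∀ f, MonotoneOn (Ffun c d δ f) (Set.Icc c d) := by
    intro f x hx y hy hxy
    rw [hF_eq f x hx, hF_eq f y hy]
    exact_mod_cast f.monotone (show (⟨x, hx⟩ : Set.Icc c d) ≤ ⟨y, hy⟩ from hxy)
  have hF_le : ∀ f f', f ≤ f' → ∀ x, Ffun c d δ f x ≤ Ffun c d δ f' x := by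
    intro f f' hff' x
    unfold Stmt12Aux.Ffun
    split
    · exact_mod_cast hff' _
    · exact le_rfl
  -- membership of iterate arguments
  have harg : ∀ (g : ℝ → ℝ), Set.MapsTo g (Set.Icc c d) (Set.Icc δ d) →
      ∀ x ∈ Set.Icc c d, ∀ k, 2 ≤ k → k ≤ n → g^[k] (ψ k x) ∈ Set.Icc δ d := by
    intro g hg x hx k h2 hkn
    have hgJ : Set.MapsTo g (Set.Icc c d) (Set.Icc c d) := fun y hy => hIJ (hg hy)
    have hψx : ψ k x ∈ Set.Icc c d := (hψ k h2 hkn).2 hx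
    obtain ⟨m, rfl⟩ : ∃ m, k = m + 1 := ⟨k - 1, by omega⟩
    rw [Function.iterate_succ_apply']
    exact hg (iter_mem hgJ hψx m)
  -- the interval bound
  have key : ∀ (a v : ℝ) (b : ℕ → ℝ), a ∈ Set.Icc δ d →
      (∀ k ∈ Finset.Icc 2 n, b k ∈ Set.Icc δ d) → δ ^ lamT ≤ v → v ≤ d ^ lamT →
      a ^ (1 - lam 1) * (∏ k ∈ Finset.Icc 2 n, (b k) ^ (-(lam k))) * v ∈ Set.Icc δ d := by
    intro a v b ha hb hv1 hv2
    have hQnonneg : (0:ℝ) ≤ ∏ k ∈ Finset.Icc 2 n, (b k) ^ (-(lam k)) :=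
      Finset.prod_nonneg fun k hk => Real.rpow_nonneg (hδ0.le.trans (hb k hk).1) _
    have hsumneg : ∑ k ∈ Finset.Icc 2 n, -(lam k) = lam 1 - lamT := by
      rw [Finset.sum_neg_distrib, hsum2]; ring
    constructor
    · have e1 : δ ^ (1 - lam 1) ≤ a ^ (1 - lam 1) :=
        Real.rpow_le_rpow hδ0.le ha.1 (by linarith)
      have e2 : δ ^ (lam 1 - lamT) ≤ ∏ k ∈ Finset.Icc 2 n, (b k) ^ (-(lam k)) := by
        rw [← hsumneg, Real.rpow_sum_of_pos hδ0]
        exact Finset.prod_le_prod (fun k _ => Real.rpow_nonneg hδ0.le _)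
          (fun k hk => Real.rpow_le_rpow hδ0.le (hb k hk).1 (hexp2 k hk))
      have hδdec : δ ^ (1 - lam 1) * δ ^ (lam 1 - lamT) * δ ^ lamT = δ := by
        rw [← Real.rpow_add hδ0, ← Real.rpow_add hδ0,
          show 1 - lam 1 + (lam 1 - lamT) + lamT = 1 by ring, Real.rpow_one]
      calc δ = δ ^ (1 - lam 1) * δ ^ (lam 1 - lamT) * δ ^ lamT := hδdec.symm
        _ ≤ a ^ (1 - lam 1) * (∏ k ∈ Finset.Icc 2 n, (b k) ^ (-(lam k))) * v := by
            apply mul_le_mul (mul_le_mul e1 e2 (Real.rpow_nonneg hδ0.le _)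
              (Real.rpow_nonneg (hδ0.le.trans ha.1) _)) hv1
              (Real.rpow_nonneg hδ0.le _)
            exact mul_nonneg (Real.rpow_nonneg (hδ0.le.trans ha.1) _) hQnonneg
    · have e1 : a ^ (1 - lam 1) ≤ d ^ (1 - lam 1) :=
        Real.rpow_le_rpow (hδ0.le.trans ha.1) ha.2 (by linarith)
      have e2 : (∏ k ∈ Finset.Icc 2 n, (b k) ^ (-(lam k))) ≤ d ^ (lam 1 - lamT) := by
        rw [← hsumneg, Real.rpow_sum_of_pos hd0]
        exact Finset.prod_le_prod
          (fun k hk => Real.rpow_nonneg (hδ0.le.trans (hb k hk).1) _)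
          (fun k hk => Real.rpow_le_rpow (hδ0.le.trans (hb k hk).1) (hb k hk).2 (hexp2 k hk))
      have hddec : d ^ (1 - lam 1) * d ^ (lam 1 - lamT) * d ^ lamT = d := by
        rw [← Real.rpow_add hd0, ← Real.rpow_add hd0,
          show 1 - lam 1 + (lam 1 - lamT) + lamT = 1 by ring, Real.rpow_one]
      calc a ^ (1 - lam 1) * (∏ k ∈ Finset.Icc 2 n, (b k) ^ (-(lam k))) * v
          ≤ d ^ (1 - lam 1) * d ^ (lam 1 - lamT) * d ^ lamT := by
            apply mul_le_mul (mul_le_mul e1 e2 hQnonneg (Real.rpow_nonneg hd0.le _)) hv2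
              (le_trans (Real.rpow_nonneg hδ0.le _) hv1)
            exact mul_nonneg (Real.rpow_nonneg hd0.le _) (Real.rpow_nonneg hd0.le _)
        _ = d := hddec
  -- bounds on G
  have hGlow : ∀ x ∈ Set.Icc c d, δ ^ lamT ≤ G x := fun x hx =>
    hGc.trans (hG hcJ hx hx.1)
  have hGhigh : ∀ x ∈ Set.Icc c d, G x ≤ d ^ lamT := fun x hx =>
    (hG hx hdJ hx.2).trans hGd
  -- membership of Tfun values
  have hTmem : ∀ (f : (Set.Icc c d) →o (Set.Icc δ d)) (x : ℝ), x ∈ Set.Icc c d →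
      Tfun c d δ n lam ψ Ξ G f x ∈ Set.Icc δ d := by
    intro f x hx
    exact key _ _ _ (hF_memI f x)
      (fun k hk => (hΞ k (hmem2 k hk).1 (hmem2 k hk).2).2
        (harg _ (fun y _ => hF_memI f y) x hx k (hmem2 k hk).1 (hmem2 k hk).2))
      (hGlow x hx) (hGhigh x hx)
  -- monotonicity of Tfun in x
  have hTmonoX : ∀ f, MonotoneOn (Tfun c d δ n lam ψ Ξ G f) (Set.Icc c d) := by
    intro f x hx y hy hxy
    unfold Stmt12Aux.Tfun
    have hFI : ∀ z, Ffun c d δ f z ∈ Set.Icc δ d := hF_memI f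
    have hFJmaps := hF_mapsJ f
    have hb : ∀ z (hz : z ∈ Set.Icc c d), ∀ k ∈ Finset.Icc 2 n,
        Ξ k ((Ffun c d δ f)^[k] (ψ k z)) ∈ Set.Icc δ d := fun z hz k hk =>
      (hΞ k (hmem2 k hk).1 (hmem2 k hk).2).2
        (harg _ (fun y _ => hFI y) z hz k (hmem2 k hk).1 (hmem2 k hk).2)
    have e1 : Ffun c d δ f x ^ (1 - lam 1) ≤ Ffun c d δ f y ^ (1 - lam 1) :=
      Real.rpow_le_rpow (hδ0.le.trans (hFI x).1) (hF_mono f hx hy hxy) (by linarith)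
    have e2 : ∏ k ∈ Finset.Icc 2 n, (Ξ k ((Ffun c d δ f)^[k] (ψ k x))) ^ (-(lam k))
        ≤ ∏ k ∈ Finset.Icc 2 n, (Ξ k ((Ffun c d δ f)^[k] (ψ k y))) ^ (-(lam k)) := by
      apply Finset.prod_le_prod
      · intro k hk; exact Real.rpow_nonneg (hδ0.le.trans (hb x hx k hk).1) _
      · intro k hk
        obtain ⟨h2, hkn⟩ := hmem2 k hk
        apply Real.rpow_le_rpow (hδ0.le.trans (hb x hx k hk).1) _ (hexp2 k hk)
        have hax := harg _ (fun z _ => hFI z) x hx k h2 hkn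
        have hay := harg _ (fun z _ => hFI z) y hy k h2 hkn
        refine (hΞ k h2 hkn).1 hax hay ?_
        exact iter_mono (hF_mono f) hFJmaps ((hψ k h2 hkn).2 hx) ((hψ k h2 hkn).2 hy)
          ((hψ k h2 hkn).1 hx hy hxy) k
    have e3 : G x ≤ G y := hG hx hy hxy
    have hQx : (0:ℝ) ≤ ∏ k ∈ Finset.Icc 2 n, (Ξ k ((Ffun c d δ f)^[k] (ψ k x))) ^ (-(lam k)) :=
      Finset.prod_nonneg fun k hk => Real.rpow_nonneg (hδ0.le.trans (hb x hx k hk).1) _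
    apply mul_le_mul (mul_le_mul e1 e2 hQx (Real.rpow_nonneg (hδ0.le.trans (hFI y).1) _)) e3
      (hδ0.le.trans (hGδ x hx))
    exact mul_nonneg (Real.rpow_nonneg (hδ0.le.trans (hFI y).1) _)
      (Finset.prod_nonneg fun k hk => Real.rpow_nonneg (hδ0.le.trans (hb y hy k hk).1) _)
  -- the operator T
  let Tf : ((Set.Icc c d) →o (Set.Icc δ d)) → ((Set.Icc c d) →o (Set.Icc δ d)) :=
    fun f => ⟨fun z => ⟨Tfun c d δ n lam ψ Ξ G f z, hTmem f z z.2⟩,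
      fun z w hzw => Subtype.mk_le_mk.mpr (hTmonoX f z.2 w.2 hzw)⟩
  have hTfmono : Monotone Tf := by
    intro f f' hff'
    intro z
    refine Subtype.mk_le_mk.mpr ?_
    unfold Stmt12Aux.Tfun
    have hFI : ∀ u, ∀ x, Ffun c d δ u x ∈ Set.Icc δ d := hF_memI
    have hb : ∀ (u : (Set.Icc c d) →o (Set.Icc δ d)), ∀ k ∈ Finset.Icc 2 n,
        Ξ k ((Ffun c d δ u)^[k] (ψ k (z:ℝ))) ∈ Set.Icc δ d := fun u k hk =>
      (hΞ k (hmem2 k hk).1 (hmem2 k hk).2).2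
        (harg _ (fun y _ => hFI u y) z z.2 k (hmem2 k hk).1 (hmem2 k hk).2)
    have e1 : Ffun c d δ f z ^ (1 - lam 1) ≤ Ffun c d δ f' z ^ (1 - lam 1) :=
      Real.rpow_le_rpow (hδ0.le.trans (hFI f z).1) (hF_le f f' hff' z) (by linarith)
    have e2 : ∏ k ∈ Finset.Icc 2 n, (Ξ k ((Ffun c d δ f)^[k] (ψ k (z:ℝ)))) ^ (-(lam k))
        ≤ ∏ k ∈ Finset.Icc 2 n, (Ξ k ((Ffun c d δ f')^[k] (ψ k (z:ℝ)))) ^ (-(lam k)) := by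
      apply Finset.prod_le_prod
      · intro k hk; exact Real.rpow_nonneg (hδ0.le.trans (hb f k hk).1) _
      · intro k hk
        obtain ⟨h2, hkn⟩ := hmem2 k hk
        refine Real.rpow_le_rpow (hδ0.le.trans (hb f k hk).1) ?_ (hexp2 k hk)
        refine (hΞ k h2 hkn).1 (harg _ (fun y _ => hFI f y) z z.2 k h2 hkn)
          (harg _ (fun y _ => hFI f' y) z z.2 k h2 hkn) ?_
        exact iter_le (fun y _ => hF_le f f' hff' y) (hF_mono f') (hF_mapsJ f) (hF_mapsJ f')
          ((hψ k h2 hkn).2 z.2) k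
    have hQx : (0:ℝ) ≤ ∏ k ∈ Finset.Icc 2 n, (Ξ k ((Ffun c d δ f)^[k] (ψ k (z:ℝ)))) ^ (-(lam k)) :=
      Finset.prod_nonneg fun k hk => Real.rpow_nonneg (hδ0.le.trans (hb f k hk).1) _
    apply mul_le_mul (mul_le_mul e1 e2 hQx (Real.rpow_nonneg (hδ0.le.trans (hFI f' z).1) _))
      le_rfl (hδ0.le.trans (hGδ z z.2))
    exact mul_nonneg (Real.rpow_nonneg (hδ0.le.trans (hFI f' z).1) _)
      (Finset.prod_nonneg fun k hk => Real.rpow_nonneg (hδ0.le.trans (hb f' k hk).1) _)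
  let T : ((Set.Icc c d) →o (Set.Icc δ d)) →o ((Set.Icc c d) →o (Set.Icc δ d)) :=
    ⟨Tf, hTfmono⟩
  -- product identity
  have hprod_eq : ∀ (g : ℝ → ℝ), Set.MapsTo g (Set.Icc c d) (Set.Icc δ d) →
      ∀ x ∈ Set.Icc c d,
      ∏ k ∈ Finset.Icc 1 n, Ψ k (g^[k] (ψ k x))
        = (g x) ^ lam 1 * ∏ k ∈ Finset.Icc 2 n, (Ξ k (g^[k] (ψ k x))) ^ lam k := by
    intro g hg x hx
    rw [hsplit, Finset.prod_insert h1notin]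
    congr 1
    · rw [hψ1 x hx, Function.iterate_one]
      exact hΨ1 (g x) (hg hx)
    · refine Finset.prod_congr rfl fun k hk => ?_
      obtain ⟨h2, hkn⟩ := hmem2 k hk
      exact hΨk k h2 hkn _ (harg g hg x hx k h2 hkn)
  -- Q * P = 1
  have hQP : ∀ (g : ℝ → ℝ), Set.MapsTo g (Set.Icc c d) (Set.Icc δ d) →
      ∀ x ∈ Set.Icc c d,
      (∏ k ∈ Finset.Icc 2 n, (Ξ k (g^[k] (ψ k x))) ^ (-(lam k))) *
        (∏ k ∈ Finset.Icc 2 n, (Ξ k (g^[k] (ψ k x))) ^ lam k) = 1 := by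
    intro g hg x hx
    rw [← Finset.prod_mul_distrib]
    refine Finset.prod_eq_one fun k hk => ?_
    obtain ⟨h2, hkn⟩ := hmem2 k hk
    have hbk : (0:ℝ) < Ξ k (g^[k] (ψ k x)) :=
      lt_of_lt_of_le hδ0 ((hΞ k h2 hkn).2 (harg g hg x hx k h2 hkn)).1
    rw [Real.rpow_neg hbk.le]
    exact inv_mul_cancel₀ (ne_of_gt (Real.rpow_pos_of_pos hbk _))
  -- the algebraic equivalence
  have halg : ∀ (a v P Q : ℝ), 0 < a → Q * P = 1 →
      (a ^ (1 - lam 1) * Q * v = a ↔ a ^ lam 1 * P = v) := by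
    intro a v P Q ha0 hQPa
    have huw : a ^ lam 1 * a ^ (1 - lam 1) = a := by
      rw [← Real.rpow_add ha0, show lam 1 + (1 - lam 1) = 1 by ring, Real.rpow_one]
    have hw0 : a ^ (1 - lam 1) ≠ 0 := ne_of_gt (Real.rpow_pos_of_pos ha0 _)
    constructor
    · intro h
      have h4 : a ^ (1 - lam 1) * (Q * v) = a ^ (1 - lam 1) * (a ^ lam 1) := by
        calc a ^ (1 - lam 1) * (Q * v) = a ^ (1 - lam 1) * Q * v := by ring
          _ = a := h
          _ = a ^ (1 - lam 1) * (a ^ lam 1) := by rw [mul_comm]; exact huw.symm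
      have h5 : Q * v = a ^ lam 1 := mul_left_cancel₀ hw0 h4
      calc a ^ lam 1 * P = (Q * v) * P := by rw [h5]
        _ = (Q * P) * v := by ring
        _ = v := by rw [hQPa, one_mul]
    · intro h
      calc a ^ (1 - lam 1) * Q * v = a ^ (1 - lam 1) * Q * (a ^ lam 1 * P) := by rw [h]
        _ = (a ^ lam 1 * a ^ (1 - lam 1)) * (Q * P) := by ring
        _ = a := by rw [huw, hQPa, mul_one]
  -- fixed points give solutions
  have hsol : ∀ f : (Set.Icc c d) →o (Set.Icc δ d), T f = f →
      ∀ x ∈ Set.Icc c d,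
      ∏ k ∈ Finset.Icc 1 n, Ψ k ((Ffun c d δ f)^[k] (ψ k x)) = G x := by
    intro f hTf x hx
    have hgI : Set.MapsTo (Ffun c d δ f) (Set.Icc c d) (Set.Icc δ d) :=
      fun y _ => hF_memI f y
    rw [hprod_eq _ hgI x hx]
    have ha0 : (0:ℝ) < Ffun c d δ f x := lt_of_lt_of_le hδ0 (hF_memI f x).1
    refine (halg (Ffun c d δ f x) (G x) _ _ ha0 (hQP _ hgI x hx)).mp ?_
    have hfix : Tfun c d δ n lam ψ Ξ G f x = Ffun c d δ f x := by
      have h1 : (T f) ⟨x, hx⟩ = f ⟨x, hx⟩ := by rw [hTf]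
      have h2 := congrArg Subtype.val h1
      rw [hF_eq f x hx]
      exact h2
    exact hfix
  -- solutions give fixed points
  have hfixpt : ∀ (g : ℝ → ℝ) (hgmono : MonotoneOn g (Set.Icc c d))
      (hgmaps : Set.MapsTo g (Set.Icc c d) (Set.Icc c d))
      (hgδ : ∀ x ∈ Set.Icc c d, δ ≤ g x)
      (hgsol : ∀ x ∈ Set.Icc c d, ∏ k ∈ Finset.Icc 1 n, Ψ k (g^[k] (ψ k x)) = G x),
      ∃ fg : (Set.Icc c d) →o (Set.Icc δ d),
        (∀ (x : ℝ) (hx : x ∈ Set.Icc c d), ((fg ⟨x, hx⟩ : ℝ)) = g x) ∧ T fg = fg := by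
    intro g hgmono hgmaps hgδ hgsol
    have hgI : Set.MapsTo g (Set.Icc c d) (Set.Icc δ d) :=
      fun y hy => ⟨hgδ y hy, (hgmaps hy).2⟩
    refine ⟨⟨fun z => ⟨g z, hgI z.2⟩,
      fun z w hzw => Subtype.mk_le_mk.mpr (hgmono z.2 w.2 hzw)⟩, fun x hx => rfl, ?_⟩
    set fg : (Set.Icc c d) →o (Set.Icc δ d) := ⟨fun z => ⟨g z, hgI z.2⟩,
      fun z w hzw => Subtype.mk_le_mk.mpr (hgmono z.2 w.2 hzw)⟩ with hfg
    have hFg : Set.EqOn (Ffun c d δ fg) g (Set.Icc c d) := by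
      intro y hy
      rw [hF_eq fg y hy]
      rfl
    have hiter : ∀ y ∈ Set.Icc c d, ∀ k, (Ffun c d δ fg)^[k] y = g^[k] y :=
      fun y hy => iter_congr hFg (hF_mapsJ fg) hy
    apply OrderHom.ext
    funext z
    refine Subtype.ext ?_
    show Tfun c d δ n lam ψ Ξ G fg z = g z
    have hz := z.2
    have hTeq : Tfun c d δ n lam ψ Ξ G fg z
        = (g (z:ℝ)) ^ (1 - lam 1) *
          (∏ k ∈ Finset.Icc 2 n, (Ξ k (g^[k] (ψ k (z:ℝ)))) ^ (-(lam k))) * G z := by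
      unfold Stmt12Aux.Tfun
      rw [hFg hz]
      congr 2
      refine Finset.prod_congr rfl fun k hk => ?_
      obtain ⟨h2, hkn⟩ := hmem2 k hk
      rw [hiter (ψ k (z:ℝ)) ((hψ k h2 hkn).2 hz) k]
    rw [hTeq]
    have ha0 : (0:ℝ) < g z := lt_of_lt_of_le hδ0 (hgδ z hz)
    refine (halg (g z) (G z) _ _ ha0 (hQP g hgI z hz)).mpr ?_
    rw [← hprod_eq g hgI z hz]
    exact hgsol z hz
  -- conclusion
  have hlfpfix : T (OrderHom.lfp T) = OrderHom.lfp T := by exact OrderHom.map_lfp T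
  have hgfpfix : T (OrderHom.gfp T) = OrderHom.gfp T := by exact OrderHom.map_gfp T
  refine ⟨Ffun c d δ (OrderHom.lfp T), Ffun c d δ (OrderHom.gfp T),
    ⟨hF_mono _, hF_mapsJ _, fun x _ => (hF_memI _ x).1, hsol _ hlfpfix⟩,
    ⟨hF_mono _, hF_mapsJ _, fun x _ => (hF_memI _ x).1, hsol _ hgfpfix⟩, ?_⟩
  intro g hgmono hgmaps hgδ hgsol x hx
  obtain ⟨fg, hfgval, hfgfix⟩ := hfixpt g hgmono hgmaps hgδ hgsol
  have hlow : OrderHom.lfp T ≤ fg := OrderHom.lfp_le T (le_of_eq hfgfix)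
  have hhigh : fg ≤ OrderHom.gfp T := OrderHom.le_gfp T (ge_of_eq hfgfix)
  constructor
  · rw [hF_eq _ x hx, ← hfgval x hx]
    exact_mod_cast hlow ⟨x, hx⟩
  · rw [hF_eq _ x hx, ← hfgval x hx]
    exact_mod_cast hhigh ⟨x, hx⟩
end

section
/- Let J = [c,d] with d > max{0,c} and δ ∈ (0,d]∩[c,d]. Suppose ψ₁ = id and ψ_k are order-preserving self-maps of J for 2 ≤ k ≤ n; Ψ₁ : J → ℝ₊ is strictly order-preserving on [δ,d]; Ψ_k : J → ℝ₊ is order-preserving on [δ,d] for 2 ≤ k ≤ n; and G ∈ 𝒢_op(J;δ). If g₁, g₂ ∈ 𝒢_op(J;δ) are both solutions of ∏_{k=1}^n Ψ_k(g^k(ψ_k(x))) = G(x) on J and g₁(x) ≤ g₂(x) for all x ∈ J, then g₁ = g₂. -/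
/-- pointwise-comparable solutions in 𝒢_op(J;δ) of
∏_{k=1}^n Ψ_k(g^k(ψ_k(x))) = G(x) coincide on J. -/
theorem stmt_13 (c d δ : ℝ) (n : ℕ) (hn : 1 ≤ n)
    (hd : max 0 c < d) (hδ0 : 0 < δ) (hδc : c ≤ δ) (hδd : δ ≤ d)
    (ψ Ψ : ℕ → ℝ → ℝ)
    (hψ1 : ∀ x ∈ Set.Icc c d, ψ 1 x = x)
    (hψ : ∀ k, 2 ≤ k → k ≤ n →
      MonotoneOn (ψ k) (Set.Icc c d) ∧ Set.MapsTo (ψ k) (Set.Icc c d) (Set.Icc c d))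
    (hΨ1 : StrictMonoOn (Ψ 1) (Set.Icc δ d))
    (hΨ1pos : ∀ x ∈ Set.Icc c d, 0 < Ψ 1 x)
    (hΨk : ∀ k, 2 ≤ k → k ≤ n → MonotoneOn (Ψ k) (Set.Icc δ d))
    (hΨkpos : ∀ k, 2 ≤ k → k ≤ n → ∀ x ∈ Set.Icc c d, 0 < Ψ k x)
    (G : ℝ → ℝ) (hG : MonotoneOn G (Set.Icc c d))
    (hGmaps : Set.MapsTo G (Set.Icc c d) (Set.Icc c d))
    (hGδ : ∀ x ∈ Set.Icc c d, δ ≤ G x)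
    (g₁ g₂ : ℝ → ℝ)
    (hg₁ : MonotoneOn g₁ (Set.Icc c d)) (hg₁maps : Set.MapsTo g₁ (Set.Icc c d) (Set.Icc c d))
    (hg₁δ : ∀ x ∈ Set.Icc c d, δ ≤ g₁ x)
    (hg₂ : MonotoneOn g₂ (Set.Icc c d)) (hg₂maps : Set.MapsTo g₂ (Set.Icc c d) (Set.Icc c d))
    (hg₂δ : ∀ x ∈ Set.Icc c d, δ ≤ g₂ x)
    (hsol₁ : ∀ x ∈ Set.Icc c d, ∏ k ∈ Finset.Icc 1 n, Ψ k (g₁^[k] (ψ k x)) = G x)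
    (hsol₂ : ∀ x ∈ Set.Icc c d, ∏ k ∈ Finset.Icc 1 n, Ψ k (g₂^[k] (ψ k x)) = G x)
    (hle : ∀ x ∈ Set.Icc c d, g₁ x ≤ g₂ x) :
    Set.EqOn g₁ g₂ (Set.Icc c d) := by
  have hcd : c ≤ d := le_of_lt (lt_of_le_of_lt (le_max_right 0 c) hd)
  have iterMem : ∀ (g : ℝ → ℝ), Set.MapsTo g (Set.Icc c d) (Set.Icc c d) →
      ∀ k, ∀ y ∈ Set.Icc c d, g^[k] y ∈ Set.Icc c d := by
    intro g hg k
    induction k with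
    | zero => intro y hy; simpa using hy
    | succ k ih =>
      intro y hy
      rw [Function.iterate_succ_apply']
      exact hg (ih y hy)
  have iterδ : ∀ (g : ℝ → ℝ), Set.MapsTo g (Set.Icc c d) (Set.Icc c d) →
      (∀ x ∈ Set.Icc c d, δ ≤ g x) →
      ∀ k, 1 ≤ k → ∀ y ∈ Set.Icc c d, δ ≤ g^[k] y := by
    intro g hmaps hδ k hk y hy
    obtain ⟨m, rfl⟩ := Nat.exists_eq_add_of_le hk
    rw [add_comm, Function.iterate_succ_apply']
    exact hδ _ (iterMem g hmaps m y hy)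
  have iterLe : ∀ k, ∀ y ∈ Set.Icc c d, g₁^[k] y ≤ g₂^[k] y := by
    intro k
    induction k with
    | zero => intro y _; simp
    | succ k ih =>
      intro y hy
      rw [Function.iterate_succ_apply', Function.iterate_succ_apply']
      have h1 := iterMem g₁ hg₁maps k y hy
      have h2 := iterMem g₂ hg₂maps k y hy
      calc g₁ (g₁^[k] y) ≤ g₂ (g₁^[k] y) := hle _ h1
        _ ≤ g₂ (g₂^[k] y) := hg₂ h1 h2 (ih y hy)
  intro x hx
  by_contra hne
  have hlt : g₁ x < g₂ x := lt_of_le_of_ne (hle x hx) hne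
  have h1mem : (1 : ℕ) ∈ Finset.Icc 1 n := by simp [hn]
  have hψmem : ∀ k ∈ Finset.Icc 1 n, ψ k x ∈ Set.Icc c d := by
    intro k hk
    rcases Finset.mem_Icc.mp hk with ⟨hk1, hkn⟩
    rcases eq_or_lt_of_le hk1 with h | h
    · rw [← h, hψ1 x hx]; exact hx
    · exact (hψ k h hkn).2 hx
  have key : ∏ k ∈ Finset.Icc 1 n, Ψ k (g₁^[k] (ψ k x)) <
      ∏ k ∈ Finset.Icc 1 n, Ψ k (g₂^[k] (ψ k x)) := by
    apply Finset.prod_lt_prod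
    · intro j hj
      rcases Finset.mem_Icc.mp hj with ⟨hj1, hjn⟩
      have hm := iterMem g₁ hg₁maps j _ (hψmem j hj)
      rcases eq_or_lt_of_le hj1 with h | h
      · subst h; exact hΨ1pos _ hm
      · exact hΨkpos j h hjn _ hm
    · intro j hj
      rcases Finset.mem_Icc.mp hj with ⟨hj1, hjn⟩
      have hψm := hψmem j hj
      have hm1 := iterMem g₁ hg₁maps j _ hψm
      have hm2 := iterMem g₂ hg₂maps j _ hψm
      have hd1 : g₁^[j] (ψ j x) ∈ Set.Icc δ d :=
        ⟨iterδ g₁ hg₁maps hg₁δ j hj1 _ hψm, hm1.2⟩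
      have hd2 : g₂^[j] (ψ j x) ∈ Set.Icc δ d :=
        ⟨iterδ g₂ hg₂maps hg₂δ j hj1 _ hψm, hm2.2⟩
      have hle' := iterLe j _ hψm
      rcases eq_or_lt_of_le hj1 with h | h
      · subst h; exact (hΨ1.monotoneOn) hd1 hd2 hle'
      · exact hΨk j h hjn hd1 hd2 hle'
    · refine ⟨1, h1mem, ?_⟩
      simp only [Function.iterate_one, hψ1 x hx]
      exact hΨ1 ⟨hg₁δ x hx, (hg₁maps hx).2⟩ ⟨hg₂δ x hx, (hg₂maps hx).2⟩ hlt
  rw [hsol₁ x hx, hsol₂ x hx] at key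
  exact lt_irrefl _ key
end

section
/- Let J = [c,d] with d > max{0,c} and δ ∈ (0,d]∩[c,d]. The set 𝒢_op^{usc}(J;δ) of order-preserving upper semi-continuous self-maps g of J with g(x) ≥ δ for all x, ordered pointwise, is a complete lattice. -/
theorem stmt15_glb (c d δ : ℝ) (hcd : c ≤ d) (hcδ : c ≤ δ) (hδd : δ ≤ d)
    (T : Set {g : Set.Icc c d → Set.Icc c d //
      Monotone g ∧ UpperSemicontinuous g ∧ ∀ x, δ ≤ (g x : ℝ)}) :
    ∃ a, IsGLB T a := by
  haveI : Fact (c ≤ d) := ⟨hcd⟩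
  set f : Set.Icc c d → Set.Icc c d := fun x => sInf ((fun g => g.1 x) '' T) with hf
  have hle : ∀ g ∈ T, ∀ x, f x ≤ g.1 x := by
    intro g hg x
    exact sInf_le ⟨g, hg, rfl⟩
  have hmono : Monotone f := by
    intro x y hxy
    apply le_sInf
    rintro _ ⟨g, hg, rfl⟩
    exact le_trans (hle g hg x) (g.2.1 hxy)
  have husc : UpperSemicontinuous f := by
    intro x y hy
    obtain ⟨_, ⟨g, hg, rfl⟩, hlt⟩ := sInf_lt_iff.mp hy
    filter_upwards [g.2.2.1 x y hlt] with x' hx'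
    exact lt_of_le_of_lt (hle g hg x') hx'
  have hδf : ∀ x, δ ≤ (f x : ℝ) := by
    intro x
    have : (⟨δ, hcδ, hδd⟩ : Set.Icc c d) ≤ f x := by
      apply le_sInf
      rintro _ ⟨g, hg, rfl⟩
      exact g.2.2.2 x
    exact this
  refine ⟨⟨f, hmono, husc, hδf⟩, ?_, ?_⟩
  · intro g hg
    exact fun x => hle g hg x
  · intro b hb
    intro x
    apply le_sInf
    rintro _ ⟨g, hg, rfl⟩
    exact hb hg x

/-- the set 𝒢_op^{usc}(J;δ) of order-preserving upper semi-continuous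
self-maps g of J = [c,d] with g(x) ≥ δ, ordered pointwise, is a complete lattice. -/
theorem stmt_15 (c d δ : ℝ) (hd : max 0 c < d) (hδc : c ≤ δ) (hδd : δ ≤ d) (hδ : 0 < δ)
    (S : Set {g : Set.Icc c d → Set.Icc c d //
      Monotone g ∧ UpperSemicontinuous g ∧ ∀ x, δ ≤ (g x : ℝ)}) :
    (∃ a, IsGLB S a) ∧ (∃ b, IsLUB S b) := by
  have hcd : c ≤ d := le_trans hδc hδd
  refine ⟨stmt15_glb c d δ hcd hδc hδd S, ?_⟩
  obtain ⟨a, ha⟩ := stmt15_glb c d δ hcd hδc hδd (upperBounds S)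
  exact ⟨a, fun s hs => ha.2 fun u hu => hu hs, ha.1⟩
end

section
/- Let J = [c,d] with d > max{0,c}, δ ∈ (0,d]∩[c,d], λ > 0, λ₁ ≤ 1, λ_k ≤ 0 for 2 ≤ k ≤ n with ∑λ_k = λ. Let ψ₁ = id and ψ_k be order-preserving upper semi-continuous self-maps of J; Ψ₁(x) = x^{λ₁} on [δ,d]; Ψ_k(x) = (Ξ_k(x))^{λ_k} for order-preserving upper semi-continuous Ξ_k with values in [δ,d]. If G is an order-preserving upper semi-continuous self-map of J with G(x) ≥ δ, G(c) ≥ δ^λ, and G(d) ≤ d^λ, then the equation ∏_{k=1}^n Ψ_k(g^k(ψ_k(x))) = G(x) has at least one solution g which is an order-preserving upper semi-continuous self-map of J with g(x) ≥ δ for all x; moreover there exist minimum and maximum such solutions. -/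
open Set Real Filter Topology

lemma s16_usc_congr {s : Set ℝ} {f f' : ℝ → ℝ} (h : ∀ x ∈ s, f x = f' x)
    (hf' : UpperSemicontinuousOn f' s) : UpperSemicontinuousOn f s := by
  intro x hx y hy
  rw [h x hx] at hy
  filter_upwards [hf' x hx y hy, eventually_mem_nhdsWithin] with z hz hzs
  rwa [h z hzs]

lemma s16_usc_comp {a b : ℝ} {s : Set ℝ} {f g : ℝ → ℝ}
    (hf : MonotoneOn f (Icc a b)) (hfu : UpperSemicontinuousOn f (Icc a b))
    (hg : UpperSemicontinuousOn g s) (hm : MapsTo g s (Icc a b)) :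
    UpperSemicontinuousOn (fun x => f (g x)) s := by
  intro x hx y hy
  simp only at hy ⊢
  have hgx : g x ∈ Icc a b := hm hx
  by_cases hcase : g x = b
  · filter_upwards [eventually_mem_nhdsWithin] with z hzs
    have h1 : g z ≤ g x := by rw [hcase]; exact (hm hzs).2
    exact lt_of_le_of_lt (hf (hm hzs) hgx h1) hy
  · have hgxb : g x < b := lt_of_le_of_ne hgx.2 hcase
    have hmem : {w | f w < y} ∈ 𝓝[Icc a b] (g x) := hfu (g x) hgx y hy
    rw [mem_nhdsWithin] at hmem
    obtain ⟨U, hUo, hUx, hUsub⟩ := hmem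
    obtain ⟨ε, hε, hball⟩ := Metric.isOpen_iff.1 hUo (g x) hUx
    have hty : g x < min b (g x + ε/2) := lt_min hgxb (by linarith)
    have hkey : ∀ w ∈ Icc a b, w ≤ min b (g x + ε/2) → f w < y := by
      intro w hw hwt
      rcases le_or_gt w (g x) with h1 | h1
      · exact lt_of_le_of_lt (hf hw hgx h1) hy
      · refine hUsub ⟨hball ?_, hw⟩
        rw [Metric.mem_ball, Real.dist_eq, abs_lt]
        have := min_le_right b (g x + ε/2)
        constructor <;> linarith
    filter_upwards [hg x hx _ hty, eventually_mem_nhdsWithin] with z hz hzs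
    exact hkey (g z) (hm hzs) (le_of_lt hz)

lemma s16_usc_mul {s : Set ℝ} {f g : ℝ → ℝ} (hf : UpperSemicontinuousOn f s)
    (hg : UpperSemicontinuousOn g s) (hf0 : ∀ x ∈ s, 0 ≤ f x) (hg0 : ∀ x ∈ s, 0 ≤ g x) :
    UpperSemicontinuousOn (fun x => f x * g x) s := by
  intro x hx y hy
  simp only at hy ⊢
  have hfx := hf0 x hx
  have hgx := hg0 x hx
  obtain ⟨ε, hε, hlt⟩ : ∃ ε > 0, (f x + ε) * (g x + ε) < y := by
    refine ⟨min 1 ((y - f x * g x) / (2 * (f x + g x + 1))), ?_, ?_⟩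
    · have : 0 < (y - f x * g x) / (2 * (f x + g x + 1)) := by
        apply div_pos (by linarith) (by linarith)
      exact lt_min one_pos this
    · set ε := min 1 ((y - f x * g x) / (2 * (f x + g x + 1))) with hεdef
      have h1 : ε ≤ 1 := min_le_left _ _
      have h2 : ε ≤ (y - f x * g x) / (2 * (f x + g x + 1)) := min_le_right _ _
      have h3 : 0 < ε := by
        apply lt_min one_pos (div_pos (by linarith) (by linarith))
      have h4 : ε * (2 * (f x + g x + 1)) ≤ y - f x * g x := by
        rw [← le_div_iff₀ (by linarith)]; exact h2
      nlinarith [mul_pos h3 h3]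
  filter_upwards [hf x hx (f x + ε) (by linarith), hg x hx (g x + ε) (by linarith),
    eventually_mem_nhdsWithin] with z hz1 hz2 hzs
  have h5 := hf0 z hzs
  have h6 := hg0 z hzs
  nlinarith

lemma s16_usc_rpow {s : Set ℝ} {f : ℝ → ℝ} {p δ : ℝ} (hδ : 0 < δ)
    (hf : UpperSemicontinuousOn f s) (hfd : ∀ x ∈ s, δ ≤ f x) (hp : 0 ≤ p) :
    UpperSemicontinuousOn (fun x => f x ^ p) s := by
  rcases eq_or_lt_of_le hp with hp0 | hp0
  · apply s16_usc_congr (f' := fun _ => (1:ℝ))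
    · intro x hx; rw [← hp0, Real.rpow_zero]
    · exact upperSemicontinuousOn_const
  · intro x hx y hy
    simp only at hy ⊢
    have hfx : 0 < f x := lt_of_lt_of_le hδ (hfd x hx)
    have hy0 : 0 < y := lt_of_le_of_lt (Real.rpow_nonneg hfx.le p) hy
    have h1 : f x < y ^ p⁻¹ := by
      have := Real.rpow_lt_rpow (Real.rpow_nonneg hfx.le p) hy (inv_pos.2 hp0)
      rwa [Real.rpow_rpow_inv hfx.le (ne_of_gt hp0)] at this
    filter_upwards [hf x hx _ h1, eventually_mem_nhdsWithin] with z hz hzs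
    have h2 : 0 ≤ f z := le_trans hδ.le (hfd z hzs)
    have := Real.rpow_lt_rpow h2 hz hp0
    rwa [Real.rpow_inv_rpow hy0.le (ne_of_gt hp0)] at this

lemma s16_usc_prod {ι : Type*} {s : Set ℝ} (F : Finset ι) (f : ι → ℝ → ℝ)
    (h1 : ∀ i ∈ F, UpperSemicontinuousOn (f i) s)
    (h0 : ∀ i ∈ F, ∀ x ∈ s, 0 ≤ f i x) :
    UpperSemicontinuousOn (fun x => ∏ i ∈ F, f i x) s := by
  classical
  induction F using Finset.induction with
  | empty => simpa using (upperSemicontinuousOn_const : UpperSemicontinuousOn (fun _ => (1:ℝ)) s)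
  | @insert a F hnotmem ih =>
    apply s16_usc_congr (f' := fun x => f a x * ∏ i ∈ F, f i x)
    · intro x hx; rw [Finset.prod_insert hnotmem]
    · exact s16_usc_mul (h1 a (Finset.mem_insert_self a F))
        (ih (fun i hi => h1 i (Finset.mem_insert_of_mem hi))
            (fun i hi => h0 i (Finset.mem_insert_of_mem hi)))
        (fun x hx => h0 a (Finset.mem_insert_self a F) x hx)
        (fun x hx => Finset.prod_nonneg fun i hi => h0 i (Finset.mem_insert_of_mem hi) x hx)

lemma s16_prod_rpow_sum {ι : Type*} (F : Finset ι) {b : ℝ} (hb : 0 < b) (e : ι → ℝ) :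
    ∏ i ∈ F, b ^ e i = b ^ (∑ i ∈ F, e i) := by
  classical
  induction F using Finset.induction with
  | empty => simp
  | @insert a F hnotmem ih =>
    rw [Finset.prod_insert hnotmem, Finset.sum_insert hnotmem, ih, ← Real.rpow_add hb]

set_option maxHeartbeats 2000000 in
/-- existence (with minimum and maximum) of order-preserving upper
semi-continuous solutions of ∏_{k=1}^n Ψ_k(g^k(ψ_k(x))) = G(x) in 𝒢_op^{usc}(J;δ). -/
theorem stmt_16 (c d δ lamT : ℝ) (n : ℕ) (hn : 1 ≤ n)
    (hd : max 0 c < d) (hδ0 : 0 < δ) (hδc : c ≤ δ) (hδd : δ ≤ d)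
    (lam : ℕ → ℝ) (hlamT : 0 < lamT) (hlam1 : lam 1 ≤ 1)
    (hlamk : ∀ k, 2 ≤ k → k ≤ n → lam k ≤ 0)
    (hsum : ∑ k ∈ Finset.Icc 1 n, lam k = lamT)
    (ψ Ψ Ξ : ℕ → ℝ → ℝ)
    (hψ1 : ∀ x ∈ Set.Icc c d, ψ 1 x = x)
    (hψ : ∀ k, 2 ≤ k → k ≤ n →
      MonotoneOn (ψ k) (Set.Icc c d) ∧ UpperSemicontinuousOn (ψ k) (Set.Icc c d) ∧
        Set.MapsTo (ψ k) (Set.Icc c d) (Set.Icc c d))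
    (hΨ1 : ∀ x ∈ Set.Icc δ d, Ψ 1 x = x ^ lam 1)
    (hΞ : ∀ k, 2 ≤ k → k ≤ n →
      MonotoneOn (Ξ k) (Set.Icc δ d) ∧ UpperSemicontinuousOn (Ξ k) (Set.Icc δ d) ∧
        Set.MapsTo (Ξ k) (Set.Icc δ d) (Set.Icc δ d))
    (hΨk : ∀ k, 2 ≤ k → k ≤ n → ∀ x ∈ Set.Icc δ d, Ψ k x = (Ξ k x) ^ lam k)
    (G : ℝ → ℝ) (hG : MonotoneOn G (Set.Icc c d))
    (hGusc : UpperSemicontinuousOn G (Set.Icc c d))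
    (hGmaps : Set.MapsTo G (Set.Icc c d) (Set.Icc c d))
    (hGδ : ∀ x ∈ Set.Icc c d, δ ≤ G x)
    (hGc : δ ^ lamT ≤ G c) (hGd : G d ≤ d ^ lamT) :
    ∃ gmin gmax : ℝ → ℝ,
      (MonotoneOn gmin (Set.Icc c d) ∧ UpperSemicontinuousOn gmin (Set.Icc c d) ∧
        Set.MapsTo gmin (Set.Icc c d) (Set.Icc c d) ∧
        (∀ x ∈ Set.Icc c d, δ ≤ gmin x) ∧
        ∀ x ∈ Set.Icc c d, ∏ k ∈ Finset.Icc 1 n, Ψ k (gmin^[k] (ψ k x)) = G x) ∧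
      (MonotoneOn gmax (Set.Icc c d) ∧ UpperSemicontinuousOn gmax (Set.Icc c d) ∧
        Set.MapsTo gmax (Set.Icc c d) (Set.Icc c d) ∧
        (∀ x ∈ Set.Icc c d, δ ≤ gmax x) ∧
        ∀ x ∈ Set.Icc c d, ∏ k ∈ Finset.Icc 1 n, Ψ k (gmax^[k] (ψ k x)) = G x) ∧
      (∀ g : ℝ → ℝ,
        MonotoneOn g (Set.Icc c d) → UpperSemicontinuousOn g (Set.Icc c d) →
        Set.MapsTo g (Set.Icc c d) (Set.Icc c d) →
        (∀ x ∈ Set.Icc c d, δ ≤ g x) →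
        (∀ x ∈ Set.Icc c d, ∏ k ∈ Finset.Icc 1 n, Ψ k (g^[k] (ψ k x)) = G x) →
        ∀ x ∈ Set.Icc c d, gmin x ≤ g x ∧ g x ≤ gmax x) := by
  classical
  have hcd : c < d := lt_of_le_of_lt (le_max_right 0 c) hd
  have hsub : Set.Icc δ d ⊆ Set.Icc c d := Set.Icc_subset_Icc hδc le_rfl
  have hcs : c ∈ Set.Icc c d := ⟨le_rfl, hcd.le⟩
  have hds : d ∈ Set.Icc c d := ⟨hcd.le, le_rfl⟩
  have hIcc : Finset.Icc 1 n = insert 1 (Finset.Icc 2 n) := by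
    ext k; simp only [Finset.mem_Icc, Finset.mem_insert]; omega
  have h1not : (1 : ℕ) ∉ Finset.Icc 2 n := by simp [Finset.mem_Icc]
  have hsplit : lam 1 + ∑ k ∈ Finset.Icc 2 n, lam k = lamT := by
    rw [← hsum, hIcc, Finset.sum_insert h1not]
  have hsum2 : ∑ k ∈ Finset.Icc 2 n, lam k ≤ 0 :=
    Finset.sum_nonpos fun k hk => hlamk k (Finset.mem_Icc.1 hk).1 (Finset.mem_Icc.1 hk).2
  have hl1 : 0 < lam 1 := by linarith
  have hneg : ∑ k ∈ Finset.Icc 2 n, (-(lam k)) = lam 1 - lamT := by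
    rw [Finset.sum_neg_distrib]; linarith
  -- basic iterate facts
  have iter_s : ∀ g : ℝ → ℝ, (∀ x ∈ Set.Icc c d, g x ∈ Set.Icc δ d) →
      ∀ k : ℕ, ∀ z ∈ Set.Icc c d, g^[k] z ∈ Set.Icc c d := by
    intro g hg k
    induction k with
    | zero => intro z hz; simpa using hz
    | succ m ih =>
      intro z hz
      rw [Function.iterate_succ_apply']
      exact hsub (hg _ (ih z hz))
  have iter_I : ∀ g : ℝ → ℝ, (∀ x ∈ Set.Icc c d, g x ∈ Set.Icc δ d) →
      ∀ k : ℕ, 1 ≤ k → ∀ z ∈ Set.Icc c d, g^[k] z ∈ Set.Icc δ d := by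
    intro g hg k hk z hz
    obtain ⟨m, rfl⟩ : ∃ m, k = m + 1 := ⟨k - 1, by omega⟩
    rw [Function.iterate_succ_apply']
    exact hg _ (iter_s g hg m z hz)
  have ψmem : ∀ k, 2 ≤ k → k ≤ n → ∀ x ∈ Set.Icc c d, ψ k x ∈ Set.Icc c d :=
    fun k h2 hn' x hx => (hψ k h2 hn').2.2 hx
  have ΞI : ∀ k, 2 ≤ k → k ≤ n → ∀ w ∈ Set.Icc δ d, Ξ k w ∈ Set.Icc δ d :=
    fun k h2 hn' => (hΞ k h2 hn').2.2
  have argI : ∀ g : ℝ → ℝ, (∀ x ∈ Set.Icc c d, g x ∈ Set.Icc δ d) →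
      ∀ k, 2 ≤ k → k ≤ n → ∀ x ∈ Set.Icc c d, g^[k] (ψ k x) ∈ Set.Icc δ d :=
    fun g hg k h2 hn' x hx => iter_I g hg k (by omega) _ (ψmem k h2 hn' x hx)
  have iter_mono : ∀ g : ℝ → ℝ, MonotoneOn g (Set.Icc c d) →
      (∀ x ∈ Set.Icc c d, g x ∈ Set.Icc δ d) →
      ∀ k : ℕ, MonotoneOn (g^[k]) (Set.Icc c d) := by
    intro g hgm hg k
    induction k with
    | zero => intro x hx y hy hxy; simpa using hxy
    | succ m ih =>
      intro x hx y hy hxy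
      rw [Function.iterate_succ_apply', Function.iterate_succ_apply']
      exact hgm (iter_s g hg m x hx) (iter_s g hg m y hy) (ih hx hy hxy)
  have iter_le : ∀ g h : ℝ → ℝ, (∀ x ∈ Set.Icc c d, g x ∈ Set.Icc δ d) →
      MonotoneOn h (Set.Icc c d) → (∀ x ∈ Set.Icc c d, h x ∈ Set.Icc δ d) →
      (∀ x ∈ Set.Icc c d, g x ≤ h x) →
      ∀ k : ℕ, ∀ z ∈ Set.Icc c d, g^[k] z ≤ h^[k] z := by
    intro g h hgI hhm hhI hle k
    induction k with
    | zero => intro z hz; simp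
    | succ m ih =>
      intro z hz
      rw [Function.iterate_succ_apply', Function.iterate_succ_apply']
      calc g (g^[m] z) ≤ h (g^[m] z) := hle _ (iter_s g hgI m z hz)
        _ ≤ h (h^[m] z) := hhm (iter_s g hgI m z hz) (iter_s h hhI m z hz) (ih z hz)
  -- the operator
  set Q : (ℝ → ℝ) → ℝ → ℝ :=
    fun g x => ∏ k ∈ Finset.Icc 2 n, Ξ k (g^[k] (ψ k x)) ^ (-(lam k)) with hQdef
  set T : (ℝ → ℝ) → ℝ → ℝ := fun g x => (G x * Q g x) ^ (lam 1)⁻¹ with hTdef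
  -- bounds on Q
  have Qlb : ∀ g : ℝ → ℝ, (∀ x ∈ Set.Icc c d, g x ∈ Set.Icc δ d) →
      ∀ x ∈ Set.Icc c d, δ ^ (lam 1 - lamT) ≤ Q g x := by
    intro g hg x hx
    rw [hQdef, ← hneg, ← s16_prod_rpow_sum _ hδ0]
    apply Finset.prod_le_prod (fun k _ => Real.rpow_nonneg hδ0.le _)
    intro k hk
    obtain ⟨h2, hn'⟩ := Finset.mem_Icc.1 hk
    have hm := ΞI k h2 hn' _ (argI g hg k h2 hn' x hx)
    exact Real.rpow_le_rpow hδ0.le hm.1 (by have := hlamk k h2 hn'; linarith)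
  have Qub : ∀ g : ℝ → ℝ, (∀ x ∈ Set.Icc c d, g x ∈ Set.Icc δ d) →
      ∀ x ∈ Set.Icc c d, Q g x ≤ d ^ (lam 1 - lamT) := by
    intro g hg x hx
    rw [hQdef, ← hneg, ← s16_prod_rpow_sum _ (lt_of_lt_of_le hδ0 hδd)]
    apply Finset.prod_le_prod
    · intro k hk
      obtain ⟨h2, hn'⟩ := Finset.mem_Icc.1 hk
      have hm := ΞI k h2 hn' _ (argI g hg k h2 hn' x hx)
      exact Real.rpow_nonneg (le_trans hδ0.le hm.1) _
    · intro k hk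
      obtain ⟨h2, hn'⟩ := Finset.mem_Icc.1 hk
      have hm := ΞI k h2 hn' _ (argI g hg k h2 hn' x hx)
      exact Real.rpow_le_rpow (le_trans hδ0.le hm.1) hm.2 (by have := hlamk k h2 hn'; linarith)
  have Qpos : ∀ g : ℝ → ℝ, (∀ x ∈ Set.Icc c d, g x ∈ Set.Icc δ d) →
      ∀ x ∈ Set.Icc c d, 0 < Q g x :=
    fun g hg x hx => lt_of_lt_of_le (Real.rpow_pos_of_pos hδ0 _) (Qlb g hg x hx)
  -- bounds on G x * Q g x
  have GQlb : ∀ g : ℝ → ℝ, (∀ x ∈ Set.Icc c d, g x ∈ Set.Icc δ d) →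
      ∀ x ∈ Set.Icc c d, δ ^ lam 1 ≤ G x * Q g x := by
    intro g hg x hx
    have hGl : δ ^ lamT ≤ G x := le_trans hGc (hG hcs hx hx.1)
    have hGx0 : 0 ≤ G x := le_trans (Real.rpow_pos_of_pos hδ0 lamT).le hGl
    calc δ ^ lam 1 = δ ^ lamT * δ ^ (lam 1 - lamT) := by
          rw [← Real.rpow_add hδ0]; ring_nf
      _ ≤ G x * Q g x :=
          mul_le_mul hGl (Qlb g hg x hx) (Real.rpow_pos_of_pos hδ0 _).le hGx0
  have GQub : ∀ g : ℝ → ℝ, (∀ x ∈ Set.Icc c d, g x ∈ Set.Icc δ d) →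
      ∀ x ∈ Set.Icc c d, G x * Q g x ≤ d ^ lam 1 := by
    intro g hg x hx
    have hd0 : (0:ℝ) < d := lt_of_lt_of_le hδ0 hδd
    have hGu : G x ≤ d ^ lamT := le_trans (hG hx hds hx.2) hGd
    calc G x * Q g x ≤ d ^ lamT * d ^ (lam 1 - lamT) :=
          mul_le_mul hGu (Qub g hg x hx) (Qpos g hg x hx).le (Real.rpow_pos_of_pos hd0 _).le
      _ = d ^ lam 1 := by rw [← Real.rpow_add hd0]; ring_nf
  have TmemI : ∀ g : ℝ → ℝ, (∀ x ∈ Set.Icc c d, g x ∈ Set.Icc δ d) →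
      ∀ x ∈ Set.Icc c d, T g x ∈ Set.Icc δ d := by
    intro g hg x hx
    have hd0 : (0:ℝ) < d := lt_of_lt_of_le hδ0 hδd
    constructor
    · calc δ = (δ ^ lam 1) ^ (lam 1)⁻¹ := (Real.rpow_rpow_inv hδ0.le (ne_of_gt hl1)).symm
        _ ≤ (G x * Q g x) ^ (lam 1)⁻¹ :=
          Real.rpow_le_rpow (Real.rpow_nonneg hδ0.le _) (GQlb g hg x hx) (inv_nonneg.2 hl1.le)
    · calc (G x * Q g x) ^ (lam 1)⁻¹ ≤ (d ^ lam 1) ^ (lam 1)⁻¹ :=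
          Real.rpow_le_rpow (le_trans (Real.rpow_nonneg hδ0.le _) (GQlb g hg x hx))
            (GQub g hg x hx) (inv_nonneg.2 hl1.le)
        _ = d := Real.rpow_rpow_inv hd0.le (ne_of_gt hl1)
  -- set L
  set L : Set (ℝ → ℝ) :=
    {g | MonotoneOn g (Set.Icc c d) ∧ UpperSemicontinuousOn g (Set.Icc c d) ∧
      ∀ x ∈ Set.Icc c d, g x ∈ Set.Icc δ d} with hLdef
  have Tmono_x : ∀ g ∈ L, MonotoneOn (T g) (Set.Icc c d) := by
    rintro g ⟨hgm, _, hgI⟩ x hx y hy hxy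
    have hQx := Qpos g hgI x hx
    have hG0 : 0 ≤ G x := le_trans hδ0.le (hGδ x hx)
    apply Real.rpow_le_rpow (mul_nonneg hG0 hQx.le) _ (inv_nonneg.2 hl1.le)
    apply mul_le_mul (hG hx hy hxy) _ hQx.le (le_trans hδ0.le (hGδ y hy))
    rw [hQdef]
    apply Finset.prod_le_prod
    · intro k hk
      obtain ⟨h2, hn'⟩ := Finset.mem_Icc.1 hk
      have hm := ΞI k h2 hn' _ (argI g hgI k h2 hn' x hx)
      exact Real.rpow_nonneg (le_trans hδ0.le hm.1) _
    · intro k hk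
      obtain ⟨h2, hn'⟩ := Finset.mem_Icc.1 hk
      have hax := argI g hgI k h2 hn' x hx
      have hay := argI g hgI k h2 hn' y hy
      have hmx := ΞI k h2 hn' _ hax
      have harg : g^[k] (ψ k x) ≤ g^[k] (ψ k y) :=
        iter_mono g hgm hgI k (ψmem k h2 hn' x hx) (ψmem k h2 hn' y hy)
          ((hψ k h2 hn').1 hx hy hxy)
      have hΞle : Ξ k (g^[k] (ψ k x)) ≤ Ξ k (g^[k] (ψ k y)) :=
        (hΞ k h2 hn').1 hax hay harg
      exact Real.rpow_le_rpow (le_trans hδ0.le hmx.1) hΞle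
        (by have := hlamk k h2 hn'; linarith)
  have Tusc : ∀ g ∈ L, UpperSemicontinuousOn (T g) (Set.Icc c d) := by
    rintro g ⟨hgm, hgu, hgI⟩
    have iter_usc : ∀ k : ℕ, UpperSemicontinuousOn (g^[k]) (Set.Icc c d) := by
      intro k
      induction k with
      | zero =>
        apply s16_usc_congr (f' := fun x => x) (fun x _ => Function.iterate_zero_apply g x)
        exact continuousOn_id.upperSemicontinuousOn
      | succ m ih =>
        apply s16_usc_congr (f' := fun x => g (g^[m] x))
          (fun x _ => Function.iterate_succ_apply' g m x)
        exact s16_usc_comp hgm hgu ih (fun x hx => iter_s g hgI m x hx)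
    have Qusc : UpperSemicontinuousOn (Q g) (Set.Icc c d) := by
      apply s16_usc_congr
        (f' := fun x => ∏ k ∈ Finset.Icc 2 n, Ξ k (g^[k] (ψ k x)) ^ (-(lam k)))
        (fun x _ => by rw [hQdef])
      apply s16_usc_prod
      · intro k hk
        obtain ⟨h2, hn'⟩ := Finset.mem_Icc.1 hk
        have husc1 : UpperSemicontinuousOn (fun x => g^[k] (ψ k x)) (Set.Icc c d) :=
          s16_usc_comp (iter_mono g hgm hgI k) (iter_usc k) (hψ k h2 hn').2.1 (hψ k h2 hn').2.2
        have husc2 : UpperSemicontinuousOn (fun x => Ξ k (g^[k] (ψ k x))) (Set.Icc c d) :=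
          s16_usc_comp (hΞ k h2 hn').1 (hΞ k h2 hn').2.1 husc1
            (fun x hx => argI g hgI k h2 hn' x hx)
        exact s16_usc_rpow hδ0 husc2
          (fun x hx => (ΞI k h2 hn' _ (argI g hgI k h2 hn' x hx)).1)
          (by have := hlamk k h2 hn'; linarith)
      · intro k hk x hx
        obtain ⟨h2, hn'⟩ := Finset.mem_Icc.1 hk
        exact Real.rpow_nonneg
          (le_trans hδ0.le (ΞI k h2 hn' _ (argI g hgI k h2 hn' x hx)).1) _
    have hGQusc : UpperSemicontinuousOn (fun x => G x * Q g x) (Set.Icc c d) :=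
      s16_usc_mul hGusc Qusc (fun x hx => le_trans hδ0.le (hGδ x hx))
        (fun x hx => (Qpos g hgI x hx).le)
    apply s16_usc_congr (f' := fun x => (G x * Q g x) ^ (lam 1)⁻¹) (fun x _ => by rw [hTdef])
    exact s16_usc_rpow (Real.rpow_pos_of_pos hδ0 (lam 1)) hGQusc
      (fun x hx => GQlb g hgI x hx) (inv_nonneg.2 hl1.le)
  have TmemL : ∀ g ∈ L, T g ∈ L :=
    fun g hg => ⟨Tmono_x g hg, Tusc g hg, fun x hx => TmemI g hg.2.2 x hx⟩
  have Tmono_g : ∀ g h : ℝ → ℝ, g ∈ L → h ∈ L → (∀ x ∈ Set.Icc c d, g x ≤ h x) →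
      ∀ x ∈ Set.Icc c d, T g x ≤ T h x := by
    rintro g h ⟨hgm, _, hgI⟩ ⟨hhm, _, hhI⟩ hle x hx
    have hG0 : 0 ≤ G x := le_trans hδ0.le (hGδ x hx)
    apply Real.rpow_le_rpow (mul_nonneg hG0 (Qpos g hgI x hx).le) _ (inv_nonneg.2 hl1.le)
    apply mul_le_mul_of_nonneg_left _ hG0
    rw [hQdef]
    apply Finset.prod_le_prod
    · intro k hk
      obtain ⟨h2, hn'⟩ := Finset.mem_Icc.1 hk
      exact Real.rpow_nonneg (le_trans hδ0.le (ΞI k h2 hn' _ (argI g hgI k h2 hn' x hx)).1) _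
    · intro k hk
      obtain ⟨h2, hn'⟩ := Finset.mem_Icc.1 hk
      have hax := argI g hgI k h2 hn' x hx
      have hay := argI h hhI k h2 hn' x hx
      have harg : g^[k] (ψ k x) ≤ h^[k] (ψ k x) :=
        iter_le g h hgI hhm hhI hle k _ (ψmem k h2 hn' x hx)
      exact Real.rpow_le_rpow (le_trans hδ0.le (ΞI k h2 hn' _ hax).1)
        ((hΞ k h2 hn').1 hax hay harg) (by have := hlamk k h2 hn'; linarith)
  -- fixed point iff functional equation
  have fix_iff : ∀ g : ℝ → ℝ, (∀ x ∈ Set.Icc c d, g x ∈ Set.Icc δ d) →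
      ∀ x ∈ Set.Icc c d,
      (T g x = g x ↔ ∏ k ∈ Finset.Icc 1 n, Ψ k (g^[k] (ψ k x)) = G x) := by
    intro g hgI x hx
    have hgx : g x ∈ Set.Icc δ d := hgI x hx
    have hgx0 : 0 < g x := lt_of_lt_of_le hδ0 hgx.1
    set P : ℝ := ∏ k ∈ Finset.Icc 2 n, Ξ k (g^[k] (ψ k x)) ^ (lam k) with hPdef
    have hPpos : 0 < P := by
      rw [hPdef]
      apply Finset.prod_pos
      intro k hk
      obtain ⟨h2, hn'⟩ := Finset.mem_Icc.1 hk
      exact Real.rpow_pos_of_pos (lt_of_lt_of_le hδ0 (ΞI k h2 hn' _ (argI g hgI k h2 hn' x hx)).1) _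
    have hQP : Q g x = P⁻¹ := by
      rw [hQdef, hPdef, ← Finset.prod_inv_distrib]
      apply Finset.prod_congr rfl
      intro k hk
      obtain ⟨h2, hn'⟩ := Finset.mem_Icc.1 hk
      exact Real.rpow_neg (le_trans hδ0.le (ΞI k h2 hn' _ (argI g hgI k h2 hn' x hx)).1) _
    have hEq : ∏ k ∈ Finset.Icc 1 n, Ψ k (g^[k] (ψ k x)) = g x ^ lam 1 * P := by
      rw [hIcc, Finset.prod_insert h1not]
      congr 1
      · rw [Function.iterate_one, hψ1 x hx, hΨ1 _ hgx]
      · rw [hPdef]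
        apply Finset.prod_congr rfl
        intro k hk
        obtain ⟨h2, hn'⟩ := Finset.mem_Icc.1 hk
        exact hΨk k h2 hn' _ (argI g hgI k h2 hn' x hx)
    have hGx0 : 0 < G x := lt_of_lt_of_le hδ0 (hGδ x hx)
    have hGP0 : 0 < G x * P⁻¹ := mul_pos hGx0 (inv_pos.2 hPpos)
    have hTval : T g x = (G x * P⁻¹) ^ (lam 1)⁻¹ := by simp only [hTdef, hQP]
    constructor
    · intro hfix
      rw [hEq]
      have h1 : g x ^ lam 1 = G x * P⁻¹ := by
        rw [← hfix, hTval, Real.rpow_inv_rpow hGP0.le (ne_of_gt hl1)]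
      rw [h1]; field_simp
    · intro heq
      rw [hEq] at heq
      have h1 : G x * P⁻¹ = g x ^ lam 1 := by
        rw [← heq]; field_simp
      rw [hTval, h1, Real.rpow_rpow_inv hgx0.le (ne_of_gt hl1)]
  -- pointwise infima
  have pinf : ∀ A : Set (ℝ → ℝ), A ⊆ L → A.Nonempty →
      ((fun x => sInf ((fun g => g x) '' A)) ∈ L ∧
      (∀ g ∈ A, ∀ x ∈ Set.Icc c d, sInf ((fun g => g x) '' A) ≤ g x) ∧
      (∀ h : ℝ → ℝ, (∀ g ∈ A, ∀ x ∈ Set.Icc c d, h x ≤ g x) →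
        ∀ x ∈ Set.Icc c d, h x ≤ sInf ((fun g => g x) '' A))) := by
    intro A hAL hAne
    have hne : ∀ x : ℝ, ((fun g => g x) '' A).Nonempty := fun x => hAne.image _
    have hbdd : ∀ x ∈ Set.Icc c d, ∀ y ∈ (fun g => g x) '' A, δ ≤ y := by
      rintro x hx y ⟨g, hg, rfl⟩
      exact ((hAL hg).2.2 x hx).1
    have hbddB : ∀ x ∈ Set.Icc c d, BddBelow ((fun g => g x) '' A) :=
      fun x hx => ⟨δ, fun y hy => hbdd x hx y hy⟩
    have hle : ∀ g ∈ A, ∀ x ∈ Set.Icc c d, sInf ((fun g => g x) '' A) ≤ g x :=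
      fun g hg x hx => csInf_le (hbddB x hx) ⟨g, hg, rfl⟩
    refine ⟨⟨?_, ?_, ?_⟩, hle, ?_⟩
    · intro x hx y hy hxy
      apply le_csInf (hne y)
      rintro b ⟨g, hg, rfl⟩
      exact le_trans (hle g hg x hx) ((hAL hg).1 hx hy hxy)
    · intro x hx z hz
      obtain ⟨b, ⟨g, hg, rfl⟩, hb⟩ := exists_lt_of_csInf_lt (hne x) hz
      filter_upwards [(hAL hg).2.1 x hx z hb, eventually_mem_nhdsWithin] with w hw hws
      exact lt_of_le_of_lt (hle g hg w hws) hw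
    · intro x hx
      obtain ⟨g, hg⟩ := hAne
      exact ⟨le_csInf (hne x) (hbdd x hx), le_trans (hle g hg x hx) ((hAL hg).2.2 x hx).2⟩
    · intro h hh x hx
      apply le_csInf (hne x)
      rintro b ⟨g, hg, rfl⟩
      exact hh g hg x hx
  have hconstd : (fun _ : ℝ => d) ∈ L :=
    ⟨monotoneOn_const, upperSemicontinuousOn_const, fun x hx => ⟨hδd, le_rfl⟩⟩
  -- minimum solution
  set Pre : Set (ℝ → ℝ) := {g | g ∈ L ∧ ∀ x ∈ Set.Icc c d, T g x ≤ g x} with hPredef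
  have hPreL : Pre ⊆ L := fun g hg => hg.1
  have hdPre : (fun _ : ℝ => d) ∈ Pre :=
    ⟨hconstd, fun x hx => (TmemI _ hconstd.2.2 x hx).2⟩
  obtain ⟨hminL, hminlb, hminglb⟩ := pinf Pre hPreL ⟨_, hdPre⟩
  have hTmin_le : ∀ x ∈ Set.Icc c d,
      T (fun x => sInf ((fun g => g x) '' Pre)) x ≤ sInf ((fun g => g x) '' Pre) := by
    apply hminglb
    intro g hg x hx
    exact le_trans (Tmono_g _ g hminL (hPreL hg) (fun z hz => hminlb g hg z hz) x hx)
      (hg.2 x hx)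
  have hTminPre : T (fun x => sInf ((fun g => g x) '' Pre)) ∈ Pre :=
    ⟨TmemL _ hminL, fun x hx => Tmono_g _ _ (TmemL _ hminL) hminL hTmin_le x hx⟩
  have hmin_fix : ∀ x ∈ Set.Icc c d,
      T (fun x => sInf ((fun g => g x) '' Pre)) x = sInf ((fun g => g x) '' Pre) :=
    fun x hx => le_antisymm (hTmin_le x hx) (hminlb _ hTminPre x hx)
  -- maximum solution
  set Post : Set (ℝ → ℝ) := {g | g ∈ L ∧ ∀ x ∈ Set.Icc c d, g x ≤ T g x} with hPostdef
  set Ub : Set (ℝ → ℝ) :=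
    {u | u ∈ L ∧ ∀ g ∈ Post, ∀ x ∈ Set.Icc c d, g x ≤ u x} with hUbdef
  have hUbL : Ub ⊆ L := fun u hu => hu.1
  have hdUb : (fun _ : ℝ => d) ∈ Ub :=
    ⟨hconstd, fun g hg x hx => ((hg.1).2.2 x hx).2⟩
  obtain ⟨hmaxL, hmaxlb, hmaxglb⟩ := pinf Ub hUbL ⟨_, hdUb⟩
  have hub : ∀ g ∈ Post, ∀ x ∈ Set.Icc c d, g x ≤ sInf ((fun g => g x) '' Ub) :=
    fun g hg => hmaxglb g (fun u hu x hx => hu.2 g hg x hx)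
  have hmax_le_T : ∀ x ∈ Set.Icc c d,
      sInf ((fun g => g x) '' Ub) ≤ T (fun x => sInf ((fun g => g x) '' Ub)) x := by
    apply hmaxlb
    refine ⟨TmemL _ hmaxL, fun g hg x hx => ?_⟩
    exact le_trans (hg.2 x hx) (Tmono_g g _ (hg.1) hmaxL (hub g hg) x hx)
  have hTmaxPost : T (fun x => sInf ((fun g => g x) '' Ub)) ∈ Post :=
    ⟨TmemL _ hmaxL, fun x hx => Tmono_g _ _ hmaxL (TmemL _ hmaxL) hmax_le_T x hx⟩
  have hmax_fix : ∀ x ∈ Set.Icc c d,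
      T (fun x => sInf ((fun g => g x) '' Ub)) x = sInf ((fun g => g x) '' Ub) :=
    fun x hx => le_antisymm (hub _ hTmaxPost x hx) (hmax_le_T x hx)
  -- assembly
  refine ⟨fun x => sInf ((fun g => g x) '' Pre), fun x => sInf ((fun g => g x) '' Ub),
    ⟨hminL.1, hminL.2.1, fun x hx => hsub (hminL.2.2 x hx),
      fun x hx => (hminL.2.2 x hx).1,
      fun x hx => (fix_iff _ (fun z hz => hminL.2.2 z hz) x hx).1 (hmin_fix x hx)⟩,
    ⟨hmaxL.1, hmaxL.2.1, fun x hx => hsub (hmaxL.2.2 x hx),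
      fun x hx => (hmaxL.2.2 x hx).1,
      fun x hx => (fix_iff _ (fun z hz => hmaxL.2.2 z hz) x hx).1 (hmax_fix x hx)⟩,
    ?_⟩
  intro g hgm hgu hgmap hgδ hgeq x hx
  have hgI : ∀ z ∈ Set.Icc c d, g z ∈ Set.Icc δ d :=
    fun z hz => ⟨hgδ z hz, (hgmap hz).2⟩
  have hgL : g ∈ L := ⟨hgm, hgu, hgI⟩
  have hfixg : ∀ z ∈ Set.Icc c d, T g z = g z :=
    fun z hz => (fix_iff g hgI z hz).2 (hgeq z hz)
  exact ⟨hminlb g ⟨hgL, fun z hz => (hfixg z hz).le⟩ x hx,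
    hub g ⟨hgL, fun z hz => (hfixg z hz).ge⟩ x hx⟩
end
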